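/- arXiv:2007.08756 — 10 statements merged into one kernel-verified Lean document; each statement's English description precedes it below -/
import Mathlib

section
/- Let a₄, a₆, u, v, A, C be integers with v ≥ 1 squarefree, gcd(u, v) = 1, C ≥ 1, and gcd(A, C) = 1. Set a := Av + C²u and g := gcd(C, v). Then g² divides C³, g² divides v·a, and the integers C³/g² and v·a/g² are coprime. In particular, if a ≠ 0 there exists an integer μ with (C³/g²)·μ ≡ 1 (mod v·a/g²). -/
/-! Write `g = gcd(C, v)`, `C = g c` and `v = g w`, so that `c` and `w` are coprime and, `v` being
squarefree, so are `g` and `w`. Then `a = g b` with `b = A w + g c² u`, and the two quotients are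
`C³/g² = g c³` and `v a/g² = w b`. Modulo `g` and modulo `c` the factor `b` reduces to `A w`, which is
coprime to both because `A` is coprime to `C = g c`; hence `g c³` is coprime to `w b`. -/

theorem IsCoprime.exists_dvd_mul_sub_one {R : Type*} [CommRing R] {x y : R} (h : IsCoprime x y) :
    ∃ μ : R, y ∣ x * μ - 1 := by
  obtain ⟨s, t, hst⟩ := h
  exact ⟨s, -t, by linear_combination hst⟩

theorem isCoprime_mul_pow_three_mul_add {R : Type*} [CommRing R] {g c w A u : R}
    (hgw : IsCoprime g w) (hcw : IsCoprime c w) (hA : IsCoprime A (g * c)) :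
    IsCoprime (g * c ^ 3) (w * (A * w + g * c ^ 2 * u)) := by
  have hgb : IsCoprime g (A * w + g * c ^ 2 * u) := by
    simpa only [mul_assoc] using
      (hA.of_mul_right_left.symm.mul_right hgw).add_mul_left_right (c ^ 2 * u)
  have hcb : IsCoprime c (A * w + g * c ^ 2 * u) := by
    convert (hA.of_mul_right_right.symm.mul_right hcw).add_mul_left_right (g * c * u) using 1
    ring
  exact (hgw.mul_right hgb).mul_left (hcw.mul_right hcb).pow_left

theorem Int.exists_eq_gcd_mul_isCoprime {C v : ℤ} (hv : v ≠ 0) :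
    ∃ c w : ℤ, C = C.gcd v * c ∧ v = C.gcd v * w ∧ IsCoprime c w := by
  obtain ⟨c, w, hcw, hC, hv'⟩ := Int.exists_gcd_one (Int.gcd_pos_of_ne_zero_right C hv)
  exact ⟨c, w, hC.trans (mul_comm _ _), hv'.trans (mul_comm _ _),
    Int.isCoprime_iff_gcd_eq_one.mpr hcw⟩

theorem stmt_1_general (u v A C : ℤ) (hvsf : Squarefree v) (hAC : Int.gcd A C = 1)
    (a g : ℤ) (ha : a = A * v + C ^ 2 * u) (hg : g = Int.gcd C v) :
    g ^ 2 ∣ C ^ 3 ∧ g ^ 2 ∣ v * a ∧ IsCoprime (C ^ 3 / g ^ 2) (v * a / g ^ 2) ∧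
      (a ≠ 0 → ∃ μ : ℤ, (v * a / g ^ 2) ∣ ((C ^ 3 / g ^ 2) * μ - 1)) := by
  obtain ⟨c, w, hC, hv, hcw⟩ := Int.exists_eq_gcd_mul_isCoprime (C := C) hvsf.ne_zero
  rw [← hg] at hC hv
  have hg0 : g ^ 2 ≠ 0 := pow_ne_zero 2 (left_ne_zero_of_mul (hv ▸ hvsf.ne_zero))
  have hgw : IsCoprime g w := (squarefree_mul_iff.mp (hv ▸ hvsf)).1.isCoprime
  have hA : IsCoprime A (g * c) := hC ▸ Int.isCoprime_iff_gcd_eq_one.mpr hAC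
  have hC3 : C ^ 3 = g ^ 2 * (g * c ^ 3) := by rw [hC]; ring
  have hva : v * a = g ^ 2 * (w * (A * w + g * c ^ 2 * u)) := by rw [ha, hC, hv]; ring
  have hcop := isCoprime_mul_pow_three_mul_add hgw hcw hA (u := u)
  rw [hC3, hva, Int.mul_ediv_cancel_left _ hg0, Int.mul_ediv_cancel_left _ hg0]
  exact ⟨dvd_mul_right _ _, dvd_mul_right _ _, hcop, fun _ => hcop.exists_dvd_mul_sub_one⟩

/-- Part (2) of Lemma 2.2: with `a = A*v + C^2*u` and `g = gcd(C, v)`, we have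
`g^2 ∣ C^3`, `g^2 ∣ v*a`, the integers `C^3/g^2` and `v*a/g^2` are coprime, and if
`a ≠ 0` there is an integer `μ` with `(C^3/g^2)*μ ≡ 1 (mod v*a/g^2)`. -/
theorem stmt_1 (a₄ a₆ u v A C : ℤ) (hv : 1 ≤ v) (hvsf : Squarefree v)
    (huv : Int.gcd u v = 1) (hC : 1 ≤ C) (hAC : Int.gcd A C = 1)
    (a g : ℤ) (ha : a = A * v + C ^ 2 * u) (hg : g = Int.gcd C v) :
    g ^ 2 ∣ C ^ 3 ∧ g ^ 2 ∣ v * a ∧ IsCoprime (C ^ 3 / g ^ 2) (v * a / g ^ 2) ∧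
      (a ≠ 0 → ∃ μ : ℤ, (v * a / g ^ 2) ∣ ((C ^ 3 / g ^ 2) * μ - 1)) :=
  stmt_1_general u v A C hvsf hAC a g ha hg
end

section
/- Let a₄, a₆, u, v, A, B, C be integers with v ≥ 1, C ≥ 1, and B² = A³ + a₄AC⁴ + a₆C⁶. Set a := Av + C²u, g := gcd(C, v), and d := v(u³ + a₄uv² − a₆v³), and assume a ≠ 0. If μ is an integer with (v·a/g²) ∣ ((C³/g²)·μ − 1), then (v·a/g²) divides μ²·(Bv²/g²)² + d. -/
/-!
On the curve, `(Bv²)² + d·(C³)² = va·Q` with `Q := v²(A² + a₄C⁴) + C²(u²C² − Avu)`, and `g²`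
divides each of `Bv²`, `C³`, `va`, `Q`. Dividing by `g⁴` gives `b² + d·c² ≡ 0 (mod n)` for
`b := Bv²/g²`, `c := C³/g²`, `n := va/g²`, and since `c·μ ≡ 1 (mod n)`,
`μ²b² + d ≡ μ²(b² + d·c²) ≡ 0 (mod n)`.
-/

theorem dvd_sq_mul_sq_add_of_dvd_mul_sub_one {R : Type*} [CommRing R] {n b c d μ : R}
    (hbc : n ∣ b ^ 2 + d * c ^ 2) (hμ : n ∣ c * μ - 1) : n ∣ μ ^ 2 * b ^ 2 + d := by
  have h : μ ^ 2 * b ^ 2 + d = μ ^ 2 * (b ^ 2 + d * c ^ 2) - d * (c * μ - 1) * (c * μ + 1) := by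
    ring
  rw [h]
  exact dvd_sub (dvd_mul_of_dvd_right hbc _) (dvd_mul_of_dvd_left (dvd_mul_of_dvd_right hμ _) _)

theorem sq_add_mul_cube_sq_eq_of_on_curve {R : Type*} [CommRing R] {a₄ a₆ A B C : R} (u v : R)
    (hB : B ^ 2 = A ^ 3 + a₄ * A * C ^ 4 + a₆ * C ^ 6) :
    (B * v ^ 2) ^ 2 + v * (u ^ 3 + a₄ * u * v ^ 2 - a₆ * v ^ 3) * (C ^ 3) ^ 2 =
      v * (A * v + C ^ 2 * u) * (v ^ 2 * (A ^ 2 + a₄ * C ^ 4) + C ^ 2 * (u ^ 2 * C ^ 2 - A * v * u)) := by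
  linear_combination v ^ 4 * hB

theorem Int.ediv_sq_add_mul_ediv_sq_eq {m x y z w : ℤ} (d : ℤ) (hm : m ≠ 0) (hx : m ∣ x)
    (hy : m ∣ y) (hz : m ∣ z) (hw : m ∣ w) (h : x ^ 2 + d * y ^ 2 = z * w) :
    (x / m) ^ 2 + d * (y / m) ^ 2 = (z / m) * (w / m) := by
  obtain ⟨x, rfl⟩ := hx
  obtain ⟨y, rfl⟩ := hy
  obtain ⟨z, rfl⟩ := hz
  obtain ⟨w, rfl⟩ := hw
  simp only [Int.mul_ediv_cancel_left _ hm]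
  exact mul_left_cancel₀ (pow_ne_zero 2 hm) (by linear_combination h)

theorem stmt_3_general (a₄ a₆ u v A B C : ℤ) (hC : 1 ≤ C)
    (hB : B ^ 2 = A ^ 3 + a₄ * A * C ^ 4 + a₆ * C ^ 6)
    (a g d : ℤ) (ha : a = A * v + C ^ 2 * u) (hg : g = Int.gcd C v)
    (hd : d = v * (u ^ 3 + a₄ * u * v ^ 2 - a₆ * v ^ 3))
    (μ : ℤ) (hμ : (v * a / g ^ 2) ∣ ((C ^ 3 / g ^ 2) * μ - 1)) :
    (v * a / g ^ 2) ∣ (μ ^ 2 * (B * v ^ 2 / g ^ 2) ^ 2 + d) := by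
  have hg0 : g ≠ 0 := by
    rw [hg]
    exact_mod_cast (Int.gcd_pos_of_ne_zero_left v (by omega)).ne'
  have hC2 : g ^ 2 ∣ C ^ 2 := pow_dvd_pow_of_dvd (hg ▸ Int.gcd_dvd_left C v) 2
  have hv2 : g ^ 2 ∣ v ^ 2 := pow_dvd_pow_of_dvd (hg ▸ Int.gcd_dvd_right C v) 2
  have hC3 : g ^ 2 ∣ C ^ 3 := hC2.trans (pow_dvd_pow C (by norm_num))
  have hva : g ^ 2 ∣ v * a := by
    rw [ha, show v * (A * v + C ^ 2 * u) = A * v ^ 2 + C ^ 2 * (u * v) by ring]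
    exact dvd_add (hv2.mul_left A) (hC2.mul_right _)
  have hQ : g ^ 2 ∣ v ^ 2 * (A ^ 2 + a₄ * C ^ 4) + C ^ 2 * (u ^ 2 * C ^ 2 - A * v * u) :=
    dvd_add (hv2.mul_right _) (hC2.mul_right _)
  refine dvd_sq_mul_sq_add_of_dvd_mul_sub_one ?_ hμ
  rw [Int.ediv_sq_add_mul_ediv_sq_eq d (pow_ne_zero 2 hg0) (hv2.mul_left B) hC3 hva hQ
    (by rw [ha, hd]; exact sq_add_mul_cube_sq_eq_of_on_curve u v hB)]
  exact dvd_mul_right _ _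

/-- Integrality of the third coefficient of `Φ_{u,v}(P, μ)` (part (3) of Lemma 2.2):
if `(C³/g²)·μ ≡ 1 (mod v·a/g²)`, then `(v·a/g²) ∣ μ²·(Bv²/g²)² + d`. -/
theorem stmt_3 (a₄ a₆ u v A B C : ℤ) (hv : 1 ≤ v) (hC : 1 ≤ C)
    (hB : B ^ 2 = A ^ 3 + a₄ * A * C ^ 4 + a₆ * C ^ 6)
    (a g d : ℤ) (ha : a = A * v + C ^ 2 * u) (hg : g = Int.gcd C v)
    (hd : d = v * (u ^ 3 + a₄ * u * v ^ 2 - a₆ * v ^ 3)) (ha0 : a ≠ 0)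
    (μ : ℤ) (hμ : (v * a / g ^ 2) ∣ ((C ^ 3 / g ^ 2) * μ - 1)) :
    (v * a / g ^ 2) ∣ (μ ^ 2 * (B * v ^ 2 / g ^ 2) ^ 2 + d) :=
  stmt_3_general a₄ a₆ u v A B C hC hB a g d ha hg hd μ hμ
end

section
/- Let a₄, a₆ be integers, let u, v be positive integers with 3u² + a₄v² > 0 and v(u³ + a₄uv² − a₆v³) > 0, and let A, B, C be integers with C ≥ 1 and B² = A³ + a₄AC⁴ + a₆C⁶. Then Av + C²u > 0. -/
/-!
Writing `a = Av + C²u`, the curve equation gives the identity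
`v³B² + C⁶(u³ + a₄uv² − a₆v³) = a²(a − 3C²u) + a·C⁴(3u² + a₄v²)`.
The left side is positive, while for `a ≤ 0` both terms on the right are `≤ 0`.
-/

theorem cube_mul_sq_add_eq_of_weierstrass {R : Type*} [CommRing R] {a₄ a₆ A B C : R} (u v : R)
    (hB : B ^ 2 = A ^ 3 + a₄ * A * C ^ 4 + a₆ * C ^ 6) :
    v ^ 3 * B ^ 2 + C ^ 6 * (u ^ 3 + a₄ * u * v ^ 2 - a₆ * v ^ 3) =
      (A * v + C ^ 2 * u) ^ 2 * (A * v + C ^ 2 * u - 3 * (C ^ 2 * u)) +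
        (A * v + C ^ 2 * u) * (C ^ 4 * (3 * u ^ 2 + a₄ * v ^ 2)) := by
  rw [hB]
  ring

theorem mul_add_sq_mul_pos_of_weierstrass {R : Type*} [CommRing R] [LinearOrder R]
    [IsStrictOrderedRing R] {a₄ a₆ u v A B C : R} (hu : 0 < u) (hv : 0 < v)
    (h1 : 0 < 3 * u ^ 2 + a₄ * v ^ 2) (h2 : 0 < v * (u ^ 3 + a₄ * u * v ^ 2 - a₆ * v ^ 3))
    (hC : C ≠ 0) (hB : B ^ 2 = A ^ 3 + a₄ * A * C ^ 4 + a₆ * C ^ 6) :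
    0 < A * v + C ^ 2 * u := by
  by_contra! ha
  have hd : 0 < u ^ 3 + a₄ * u * v ^ 2 - a₆ * v ^ 3 := pos_of_mul_pos_right h2 hv.le
  have hlhs : 0 < v ^ 3 * B ^ 2 + C ^ 6 * (u ^ 3 + a₄ * u * v ^ 2 - a₆ * v ^ 3) := by
    have : 0 < C ^ 6 := Even.pow_pos (by decide) hC
    positivity
  have hCu : 0 ≤ C ^ 2 * u := by positivity
  have hrhs : (A * v + C ^ 2 * u) ^ 2 * (A * v + C ^ 2 * u - 3 * (C ^ 2 * u)) +
      (A * v + C ^ 2 * u) * (C ^ 4 * (3 * u ^ 2 + a₄ * v ^ 2)) ≤ 0 :=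
    add_nonpos (mul_nonpos_of_nonneg_of_nonpos (sq_nonneg _) (by linarith))
      (mul_nonpos_of_nonpos_of_nonneg ha (by positivity))
  rw [cube_mul_sq_add_eq_of_weierstrass u v hB] at hlhs
  exact hrhs.not_gt hlhs

/-- For a map-suitable pair `(u, v)` and a rational point `(A/C², B/C³)` of `E`, the
leading coefficient `a = Av + C²u` of the form `Φ_{u,v}(P, μ)` is positive. -/
theorem stmt_5 (a₄ a₆ u v A B C : ℤ) (hu : 0 < u) (hv : 0 < v)
    (h1 : 0 < 3 * u ^ 2 + a₄ * v ^ 2)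
    (h2 : 0 < v * (u ^ 3 + a₄ * u * v ^ 2 - a₆ * v ^ 3))
    (hC : 1 ≤ C) (hB : B ^ 2 = A ^ 3 + a₄ * A * C ^ 4 + a₆ * C ^ 6) :
    0 < A * v + C ^ 2 * u :=
  mul_add_sq_mul_pos_of_weierstrass hu hv h1 h2 (by omega) hB
end

section
/- Let a₄, a₆, M, N and A₁, A₂, A₃, C₁, C₂, C₃ be integers with gcd(Aᵢ, Cᵢ) = 1 for each i, set C := C₁C₂C₃, and assume the identity of polynomials in ℤ[x]: (C₁²x − A₁)(C₂²x − A₂)(C₃²x − A₃) = C²(x³ + a₄x + a₆) − (Mx + N)². Then for every permutation {i, j, k} of {1, 2, 3}, the product CᵢCⱼ divides MN + AᵢAⱼCₖ². -/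
/-!
Comparing coefficients in the identity gives `M² = Σ AᵢCⱼ²Cₖ²`, `2MN = C²a₄ - Σ AᵢAⱼCₖ²` and
`N² = C²a₆ + A₁A₂A₃`. Substituting these into `(MN + A₁A₂C₃²)²` leaves
`C²a₆·M² + A₁A₂C₃²·C²a₄ + A₁A₂A₃²C₁²C₂²`, a multiple of `(C₁C₂)²`; over `ℤ` this gives
`C₁C₂ ∣ MN + A₁A₂C₃²`. The other two divisibilities are the same statement with the points relabelled.
-/

open Polynomial

section CommRing

variable {R : Type*} [CommRing R] (a₄ a₆ M N A₁ A₂ A₃ C₁ C₂ C₃ Cp : R)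

theorem coeff_relations_of_line_identity
    (hline : (C (C₁ ^ 2) * X - C A₁) * (C (C₂ ^ 2) * X - C A₂) * (C (C₃ ^ 2) * X - C A₃)
      = C (Cp ^ 2) * (X ^ 3 + C a₄ * X + C a₆) - (C M * X + C N) ^ 2) :
    M ^ 2 = A₁ * C₂ ^ 2 * C₃ ^ 2 + A₂ * C₁ ^ 2 * C₃ ^ 2 + A₃ * C₁ ^ 2 * C₂ ^ 2 ∧
    2 * (M * N) = Cp ^ 2 * a₄ - (A₁ * A₂ * C₃ ^ 2 + A₁ * A₃ * C₂ ^ 2 + A₂ * A₃ * C₁ ^ 2) ∧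
    N ^ 2 = Cp ^ 2 * a₆ + A₁ * A₂ * A₃ := by
  have hlhs : (C (C₁ ^ 2) * X - C A₁) * (C (C₂ ^ 2) * X - C A₂) * (C (C₃ ^ 2) * X - C A₃)
      = Cubic.toPoly ⟨C₁ ^ 2 * C₂ ^ 2 * C₃ ^ 2,
          -(A₁ * C₂ ^ 2 * C₃ ^ 2 + A₂ * C₁ ^ 2 * C₃ ^ 2 + A₃ * C₁ ^ 2 * C₂ ^ 2),
          A₁ * A₂ * C₃ ^ 2 + A₁ * A₃ * C₂ ^ 2 + A₂ * A₃ * C₁ ^ 2, -(A₁ * A₂ * A₃)⟩ := by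
    simp only [Cubic.toPoly, map_neg, map_add, map_mul, map_pow]
    ring
  have hrhs : C (Cp ^ 2) * (X ^ 3 + C a₄ * X + C a₆) - (C M * X + C N) ^ 2
      = Cubic.toPoly ⟨Cp ^ 2, -M ^ 2, Cp ^ 2 * a₄ - 2 * (M * N), Cp ^ 2 * a₆ - N ^ 2⟩ := by
    simp only [Cubic.toPoly, map_neg, map_sub, map_mul, map_pow, map_ofNat]
    ring
  rw [hlhs, hrhs, Cubic.toPoly_injective, Cubic.mk.injEq] at hline
  obtain ⟨-, hX2, hX1, hX0⟩ := hline
  exact ⟨by linear_combination hX2, by linear_combination hX1, by linear_combination hX0⟩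

theorem sq_dvd_sq_of_line_identity (hCp : Cp = C₁ * C₂ * C₃)
    (hline : (C (C₁ ^ 2) * X - C A₁) * (C (C₂ ^ 2) * X - C A₂) * (C (C₃ ^ 2) * X - C A₃)
      = C (Cp ^ 2) * (X ^ 3 + C a₄ * X + C a₆) - (C M * X + C N) ^ 2) :
    (C₁ * C₂) ^ 2 ∣ (M * N + A₁ * A₂ * C₃ ^ 2) ^ 2 := by
  obtain ⟨hM, hMN, hN⟩ := coeff_relations_of_line_identity a₄ a₆ M N A₁ A₂ A₃ C₁ C₂ C₃ Cp hline
  subst hCp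
  refine ⟨C₃ ^ 2 * a₆ * (A₁ * C₂ ^ 2 * C₃ ^ 2 + A₂ * C₁ ^ 2 * C₃ ^ 2 + A₃ * C₁ ^ 2 * C₂ ^ 2)
      + A₁ * A₂ * A₃ ^ 2 + A₁ * A₂ * C₃ ^ 4 * a₄, ?_⟩
  linear_combination N ^ 2 * hM
    + (A₁ * C₂ ^ 2 * C₃ ^ 2 + A₂ * C₁ ^ 2 * C₃ ^ 2 + A₃ * C₁ ^ 2 * C₂ ^ 2) * hN
    + A₁ * A₂ * C₃ ^ 2 * hMN

end CommRing

theorem Int.dvd_of_line_identity (a₄ a₆ M N A₁ A₂ A₃ C₁ C₂ C₃ Cp : ℤ) (hCp : Cp = C₁ * C₂ * C₃)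
    (hline : (C (C₁ ^ 2) * X - C A₁) * (C (C₂ ^ 2) * X - C A₂) * (C (C₃ ^ 2) * X - C A₃)
      = C (Cp ^ 2) * (X ^ 3 + C a₄ * X + C a₆) - (C M * X + C N) ^ 2) :
    C₁ * C₂ ∣ M * N + A₁ * A₂ * C₃ ^ 2 :=
  (Int.pow_dvd_pow_iff two_ne_zero).mp
    (sq_dvd_sq_of_line_identity a₄ a₆ M N A₁ A₂ A₃ C₁ C₂ C₃ Cp hCp hline)

open Polynomial in
/-- `MN + AᵢAⱼCₖ²` is symmetric in `i, j`, so these three divisibilities cover all six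
permutations. -/
theorem stmt_7_general (a₄ a₆ M N A₁ A₂ A₃ C₁ C₂ C₃ : ℤ)
    (Cp : ℤ) (hCp : Cp = C₁ * C₂ * C₃)
    (hline : (C (C₁ ^ 2) * X - C A₁) * (C (C₂ ^ 2) * X - C A₂) * (C (C₃ ^ 2) * X - C A₃)
      = C (Cp ^ 2) * (X ^ 3 + C a₄ * X + C a₆) - (C M * X + C N) ^ 2) :
    C₁ * C₂ ∣ M * N + A₁ * A₂ * C₃ ^ 2 ∧
    C₁ * C₃ ∣ M * N + A₁ * A₃ * C₂ ^ 2 ∧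
    C₂ * C₃ ∣ M * N + A₂ * A₃ * C₁ ^ 2 :=
  ⟨Int.dvd_of_line_identity a₄ a₆ M N A₁ A₂ A₃ C₁ C₂ C₃ Cp hCp hline,
    Int.dvd_of_line_identity a₄ a₆ M N A₁ A₃ A₂ C₁ C₃ C₂ Cp (by rw [hCp]; ring)
      (by linear_combination hline),
    Int.dvd_of_line_identity a₄ a₆ M N A₂ A₃ A₁ C₂ C₃ C₁ Cp (by rw [hCp]; ring)
      (by linear_combination hline)⟩

open Polynomial in
/-- Divisibility condition (7) of Lemma 2.7: for every permutation `{i, j, k}` of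
`{1, 2, 3}`, `CᵢCⱼ ∣ MN + AᵢAⱼCₖ²` (the expression is symmetric in `i, j`, so the
three stated divisibilities cover all six permutations). -/
theorem stmt_7 (a₄ a₆ M N A₁ A₂ A₃ C₁ C₂ C₃ : ℤ)
    (h₁ : Int.gcd A₁ C₁ = 1) (h₂ : Int.gcd A₂ C₂ = 1) (h₃ : Int.gcd A₃ C₃ = 1)
    (Cp : ℤ) (hCp : Cp = C₁ * C₂ * C₃)
    (hline : (C (C₁ ^ 2) * X - C A₁) * (C (C₂ ^ 2) * X - C A₂) * (C (C₃ ^ 2) * X - C A₃)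
      = C (Cp ^ 2) * (X ^ 3 + C a₄ * X + C a₆) - (C M * X + C N) ^ 2) :
    C₁ * C₂ ∣ M * N + A₁ * A₂ * C₃ ^ 2 ∧
    C₁ * C₃ ∣ M * N + A₁ * A₃ * C₂ ^ 2 ∧
    C₂ * C₃ ∣ M * N + A₂ * A₃ * C₁ ^ 2 :=
  stmt_7_general a₄ a₆ M N A₁ A₂ A₃ C₁ C₂ C₃ Cp hCp hline
end

section
/- Let a₄, a₆ be integers, let u, v be positive integers with v squarefree and gcd(u, v) = 1, and for i = 1, 2, 3 let Aᵢ, Bᵢ, Cᵢ be integers with Cᵢ ≥ 1, gcd(Aᵢ, Cᵢ) = gcd(Bᵢ, Cᵢ) = 1, and Bᵢ² = Aᵢ³ + a₄AᵢCᵢ⁴ + a₆Cᵢ⁶. Let M, N be integers such that, with C := C₁C₂C₃, the polynomial identity (C₁²x − A₁)(C₂²x − A₂)(C₃²x − A₃) = C²(x³ + a₄x + a₆) − (Mx + N)² holds in ℤ[x]. Set aᵢ := Aᵢv + Cᵢ²u, b := Nv − Mu, gᵢ := gcd(Cᵢ, v), and let μᵢ, ℓᵢ be integers with Cᵢ³μᵢ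 + v·aᵢ·ℓᵢ = gᵢ². Set Qᵢ := b·v·ℓᵢ − M·Cᵢ·μᵢ. Then for each i = 1, 2, 3, the product g₁g₂g₃ divides v·Qᵢ. -/
/-!
Comparing the coefficients of `x²` in the line identity gives
`M² = A₁C₂²C₃² + A₂C₁²C₃² + A₃C₁²C₂²`, so every common divisor of two of the `Cᵢ` divides `M`.
Since `gⱼ, gₖ ∣ v`, we have `gⱼgₖ ∣ gcd(gⱼ, gₖ) · v ∣ M v`, hence `g₁g₂g₃ ∣ Cᵢ M v`; and
`t := gcd(g₁, g₂, g₃)` divides both `v` and `M`, hence `b = Nv − Mu`, while `g₁g₂g₃ ∣ t v²`.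
Finally `v Qᵢ = b v² ℓᵢ − Cᵢ M v μᵢ`.
-/

section GCDMonoid

variable {α : Type*} [CommMonoidWithZero α] [GCDMonoid α]

theorem mul_dvd_gcd_mul_of_dvd_of_dvd {x y v : α} (hx : x ∣ v) (hy : y ∣ v) :
    x * y ∣ gcd x y * v :=
  (gcd_mul_lcm x y).dvd_iff_dvd_left.mp (mul_dvd_mul_left _ (lcm_dvd hx hy))

theorem mul_mul_dvd_gcd_gcd_mul_sq {x y z v : α} (hx : x ∣ v) (hy : y ∣ v) (hz : z ∣ v) :
    x * y * z ∣ gcd x (gcd y z) * v ^ 2 :=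
  calc x * y * z = x * (y * z) := mul_assoc x y z
    _ ∣ x * (gcd y z * v) := mul_dvd_mul_left x (mul_dvd_gcd_mul_of_dvd_of_dvd hy hz)
    _ = x * gcd y z * v := (mul_assoc x _ v).symm
    _ ∣ gcd x (gcd y z) * v * v :=
      mul_dvd_mul_right (mul_dvd_gcd_mul_of_dvd_of_dvd hx ((gcd_dvd_left y z).trans hy)) v
    _ = gcd x (gcd y z) * v ^ 2 := by rw [mul_assoc, sq]

end GCDMonoid

section CommRing

variable {R : Type*} [CommRing R]

open Polynomial in
theorem sq_eq_of_line_identity [IsDomain R] [CharZero R] {a₄ a₆ A₁ A₂ A₃ C₁ C₂ C₃ M N : R}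
    (h : (C (C₁ ^ 2) * X - C A₁) * (C (C₂ ^ 2) * X - C A₂) * (C (C₃ ^ 2) * X - C A₃)
      = C ((C₁ * C₂ * C₃) ^ 2) * (X ^ 3 + C a₄ * X + C a₆) - (C M * X + C N) ^ 2) :
    M ^ 2 = A₁ * C₂ ^ 2 * C₃ ^ 2 + A₂ * C₁ ^ 2 * C₃ ^ 2 + A₃ * C₁ ^ 2 * C₂ ^ 2 := by
  have e₀ := congrArg (eval 0) h
  have e₁ := congrArg (eval 1) h
  have e₁' := congrArg (eval (-1)) h
  simp only [eval_mul, eval_sub, eval_add, eval_pow, eval_C, eval_X] at e₀ e₁ e₁'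
  -- `e₁ + e₁' − 2e₀` isolates twice the `x²` coefficient.
  exact mul_left_cancel₀ two_ne_zero (by linear_combination e₁ + e₁' - 2 * e₀)

theorem dvd_of_sq_eq_of_dvd_of_dvd [IsDomain R] [GCDMonoid R] {A₁ A₂ A₃ C₁ C₂ C₃ M d : R}
    (hM : M ^ 2 = A₁ * C₂ ^ 2 * C₃ ^ 2 + A₂ * C₁ ^ 2 * C₃ ^ 2 + A₃ * C₁ ^ 2 * C₂ ^ 2)
    (h₂ : d ∣ C₂) (h₃ : d ∣ C₃) : d ∣ M := by
  have hd₂ : d ^ 2 ∣ C₂ ^ 2 := pow_dvd_pow_of_dvd h₂ 2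
  have hd₃ : d ^ 2 ∣ C₃ ^ 2 := pow_dvd_pow_of_dvd h₃ 2
  refine (IsIntegrallyClosed.pow_dvd_pow_iff two_ne_zero).mp ?_
  rw [hM]
  exact dvd_add (dvd_add (hd₃.mul_left _) (hd₃.mul_left _)) (hd₂.mul_left _)

theorem mul_mul_dvd_mul_sub_of_sq_eq [IsDomain R] [GCDMonoid R]
    {A₁ A₂ A₃ C₁ C₂ C₃ M N u v b ℓ μ g₁ g₂ g₃ : R}
    (hM : M ^ 2 = A₁ * C₂ ^ 2 * C₃ ^ 2 + A₂ * C₁ ^ 2 * C₃ ^ 2 + A₃ * C₁ ^ 2 * C₂ ^ 2)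
    (h₁C : g₁ ∣ C₁) (h₂C : g₂ ∣ C₂) (h₃C : g₃ ∣ C₃) (h₁v : g₁ ∣ v) (h₂v : g₂ ∣ v) (h₃v : g₃ ∣ v)
    (hb : b = N * v - M * u) :
    g₁ * g₂ * g₃ ∣ v * (b * v * ℓ - M * C₁ * μ) := by
  have h₂₃M : gcd g₂ g₃ ∣ M :=
    dvd_of_sq_eq_of_dvd_of_dvd hM ((gcd_dvd_left _ _).trans h₂C) ((gcd_dvd_right _ _).trans h₃C)
  have hCMv : g₁ * g₂ * g₃ ∣ C₁ * (M * v) := by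
    rw [mul_assoc]
    exact mul_dvd_mul h₁C
      ((mul_dvd_gcd_mul_of_dvd_of_dvd h₂v h₃v).trans (mul_dvd_mul_right h₂₃M v))
  have htb : gcd g₁ (gcd g₂ g₃) ∣ b :=
    hb ▸ dvd_sub (((gcd_dvd_left _ _).trans h₁v).mul_left N)
      (((gcd_dvd_right _ _).trans h₂₃M).mul_right u)
  have hbv : g₁ * g₂ * g₃ ∣ b * v ^ 2 :=
    (mul_mul_dvd_gcd_gcd_mul_sq h₁v h₂v h₃v).trans (mul_dvd_mul_right htb _)
  rw [show v * (b * v * ℓ - M * C₁ * μ) = b * v ^ 2 * ℓ - C₁ * (M * v) * μ by ring]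
  exact dvd_sub (hbv.mul_right ℓ) (hCMv.mul_right μ)

end CommRing

open Polynomial in
theorem stmt_9_general (a₄ a₆ u v : ℤ)
    (A₁ A₂ A₃ C₁ C₂ C₃ : ℤ)
    (M N Cp : ℤ) (hCp : Cp = C₁ * C₂ * C₃)
    (hline : (C (C₁ ^ 2) * X - C A₁) * (C (C₂ ^ 2) * X - C A₂) * (C (C₃ ^ 2) * X - C A₃)
      = C (Cp ^ 2) * (X ^ 3 + C a₄ * X + C a₆) - (C M * X + C N) ^ 2)
    (b g₁ g₂ g₃ : ℤ)
    (hb : b = N * v - M * u)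
    (hg₁ : g₁ = Int.gcd C₁ v) (hg₂ : g₂ = Int.gcd C₂ v) (hg₃ : g₃ = Int.gcd C₃ v)
    (μ₁ μ₂ μ₃ l₁ l₂ l₃ : ℤ)
    (Q₁ Q₂ Q₃ : ℤ)
    (hQ₁ : Q₁ = b * v * l₁ - M * C₁ * μ₁)
    (hQ₂ : Q₂ = b * v * l₂ - M * C₂ * μ₂)
    (hQ₃ : Q₃ = b * v * l₃ - M * C₃ * μ₃) :
    g₁ * g₂ * g₃ ∣ v * Q₁ ∧ g₁ * g₂ * g₃ ∣ v * Q₂ ∧ g₁ * g₂ * g₃ ∣ v * Q₃ := by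
  have hM := sq_eq_of_line_identity (hCp ▸ hline)
  have hdvd : ∀ {g c : ℤ}, g = Int.gcd c v → g ∣ c ∧ g ∣ v :=
    fun h ↦ h ▸ ⟨Int.gcd_dvd_left _ _, Int.gcd_dvd_right _ _⟩
  obtain ⟨h₁C, h₁v⟩ := hdvd hg₁
  obtain ⟨h₂C, h₂v⟩ := hdvd hg₂
  obtain ⟨h₃C, h₃v⟩ := hdvd hg₃
  subst hQ₁ hQ₂ hQ₃
  refine ⟨mul_mul_dvd_mul_sub_of_sq_eq hM h₁C h₂C h₃C h₁v h₂v h₃v hb, ?_, ?_⟩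
  · rw [mul_comm g₁ g₂]
    exact mul_mul_dvd_mul_sub_of_sq_eq (A₁ := A₂) (A₂ := A₁) (A₃ := A₃)
      (by linear_combination hM) h₂C h₁C h₃C h₂v h₁v h₃v hb
  · rw [← mul_rotate g₃ g₁ g₂]
    exact mul_mul_dvd_mul_sub_of_sq_eq (A₁ := A₃) (A₂ := A₁) (A₃ := A₂) (by linear_combination hM)
      h₃C h₁C h₂C h₃v h₁v h₂v hb

open Polynomial in
theorem stmt_9 (a₄ a₆ u v : ℤ) (hu : 0 < u) (hv : 0 < v) (hvsf : Squarefree v)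
    (huv : Int.gcd u v = 1)
    (A₁ A₂ A₃ B₁ B₂ B₃ C₁ C₂ C₃ : ℤ)
    (hC₁ : 1 ≤ C₁) (hC₂ : 1 ≤ C₂) (hC₃ : 1 ≤ C₃)
    (hAC₁ : Int.gcd A₁ C₁ = 1) (hAC₂ : Int.gcd A₂ C₂ = 1) (hAC₃ : Int.gcd A₃ C₃ = 1)
    (hBC₁ : Int.gcd B₁ C₁ = 1) (hBC₂ : Int.gcd B₂ C₂ = 1) (hBC₃ : Int.gcd B₃ C₃ = 1)
    (hB₁ : B₁ ^ 2 = A₁ ^ 3 + a₄ * A₁ * C₁ ^ 4 + a₆ * C₁ ^ 6)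
    (hB₂ : B₂ ^ 2 = A₂ ^ 3 + a₄ * A₂ * C₂ ^ 4 + a₆ * C₂ ^ 6)
    (hB₃ : B₃ ^ 2 = A₃ ^ 3 + a₄ * A₃ * C₃ ^ 4 + a₆ * C₃ ^ 6)
    (M N Cp : ℤ) (hCp : Cp = C₁ * C₂ * C₃)
    (hline : (C (C₁ ^ 2) * X - C A₁) * (C (C₂ ^ 2) * X - C A₂) * (C (C₃ ^ 2) * X - C A₃)
      = C (Cp ^ 2) * (X ^ 3 + C a₄ * X + C a₆) - (C M * X + C N) ^ 2)
    (a₁ a₂ a₃ b g₁ g₂ g₃ : ℤ)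
    (ha₁ : a₁ = A₁ * v + C₁ ^ 2 * u) (ha₂ : a₂ = A₂ * v + C₂ ^ 2 * u)
    (ha₃ : a₃ = A₃ * v + C₃ ^ 2 * u) (hb : b = N * v - M * u)
    (hg₁ : g₁ = Int.gcd C₁ v) (hg₂ : g₂ = Int.gcd C₂ v) (hg₃ : g₃ = Int.gcd C₃ v)
    (μ₁ μ₂ μ₃ l₁ l₂ l₃ : ℤ)
    (hμ₁ : C₁ ^ 3 * μ₁ + v * a₁ * l₁ = g₁ ^ 2)
    (hμ₂ : C₂ ^ 3 * μ₂ + v * a₂ * l₂ = g₂ ^ 2)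
    (hμ₃ : C₃ ^ 3 * μ₃ + v * a₃ * l₃ = g₃ ^ 2)
    (Q₁ Q₂ Q₃ : ℤ)
    (hQ₁ : Q₁ = b * v * l₁ - M * C₁ * μ₁)
    (hQ₂ : Q₂ = b * v * l₂ - M * C₂ * μ₂)
    (hQ₃ : Q₃ = b * v * l₃ - M * C₃ * μ₃) :
    g₁ * g₂ * g₃ ∣ v * Q₁ ∧ g₁ * g₂ * g₃ ∣ v * Q₂ ∧ g₁ * g₂ * g₃ ∣ v * Q₃ :=
  stmt_9_general a₄ a₆ u v A₁ A₂ A₃ C₁ C₂ C₃ M N Cp hCp hline b g₁ g₂ g₃ hb hg₁ hg₂ hg₃ μ₁ μ₂ μ₃ l₁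
    l₂ l₃ Q₁ Q₂ Q₃ hQ₁ hQ₂ hQ₃
end

section
/- Let a₄, a₆ be integers, let u, v be positive integers with v squarefree and gcd(u, v) = 1, and for i = 1, 2, 3 let Aᵢ, Bᵢ, Cᵢ be integers with Cᵢ ≥ 1, gcd(Aᵢ, Cᵢ) = gcd(Bᵢ, Cᵢ) = 1, and Bᵢ² = Aᵢ³ + a₄AᵢCᵢ⁴ + a₆Cᵢ⁶. Let M, N be integers such that, with C := C₁C₂C₃, the polynomial identity (C₁²x − A₁)(C₂²x − A₂)(C₃²x − A₃) = C²(x³ + a₄x + a₆) − (Mx + N)² holds in ℤ[x]. Set aᵢ := Aᵢv + Cᵢ²u, b := Nv − Mu, gᵢ := gcd(Cᵢ, v), let μᵢ, ℓᵢ be integers with Cᵢ³μᵢ + v·aᵢ·ℓᵢ = gᵢ², and set Qᵢ := b·v·ℓᵢ − M·Cᵢ·μᵢ. Then for every permutation {i, j, k} of {1, 2, 3}, the product C·gᵢ·gⱼ·gₖ divides v·Qⱼ·Qₖ − aᵢ·gⱼ²·gₖ². -/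
/-!
The line `y = (M x + N) / C` meets `E` at the three points `(Aᵢ / Cᵢ², ±Bᵢ / Cᵢ³)`, so
`M Aᵢ + N Cᵢ² = ±Cⱼ Cₖ Bᵢ`. Combining these, `Cᵢ Cⱼ` divides both `(Aᵢ Cⱼ² + Aⱼ Cᵢ²) T` and
`Aₖ T` for `T = M N + Aᵢ Aⱼ Cₖ²`, and no prime divides `Cᵢ Cⱼ`, `Aᵢ Cⱼ² + Aⱼ Cᵢ²` and `Aₖ` at
once, whence `Cᵢ Cⱼ ∣ T`. Substituting the Bézout relations for `gⱼ², gₖ²` and the coefficient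
identities of the line, `v Qⱼ Qₖ - aᵢ gⱼ² gₖ²` becomes `C` times a sum of terms each carrying,
for every index `m`, a factor `Cₘ` or `v`; both are divisible by `gₘ`.
-/

theorem dvd_of_dvd_mul_of_dvd_mul {R : Type*} [EuclideanDomain R] {d x y t : R} (hd : d ≠ 0)
    (hx : d ∣ x * t) (hy : d ∣ y * t) (hp : ∀ p, Prime p → p ∣ d → p ∣ x → ¬p ∣ y) : d ∣ t := by
  classical
  have hcop : IsCoprime d (EuclideanDomain.gcd x y) :=
    isCoprime_of_prime_dvd (fun h => hd h.1) fun p hp' hpd hpg =>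
      hp p hp' hpd (hpg.trans (EuclideanDomain.gcd_dvd_left x y))
        (hpg.trans (EuclideanDomain.gcd_dvd_right x y))
  refine hcop.dvd_of_dvd_mul_left ?_
  rw [EuclideanDomain.gcd_eq_gcd_ab, add_mul, mul_right_comm, mul_right_comm y]
  exact dvd_add (hx.mul_right _) (hy.mul_right _)

/-- The coefficients of `x⁰, x¹, x²` in
`(C₁² x - A₁)(C₂² x - A₂)(C₃² x - A₃) = (C₁ C₂ C₃)² (x³ + a₄ x + a₆) - (M x + N)²`. -/
structure LineIdentity (a₄ a₆ M N A₁ A₂ A₃ C₁ C₂ C₃ : ℤ) : Prop where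
  coeff_zero : N ^ 2 = A₁ * A₂ * A₃ + (C₁ * C₂ * C₃) ^ 2 * a₆
  coeff_one : 2 * (M * N) =
    (C₁ * C₂ * C₃) ^ 2 * a₄ - (A₁ * A₂ * C₃ ^ 2 + A₁ * A₃ * C₂ ^ 2 + A₂ * A₃ * C₁ ^ 2)
  coeff_two : M ^ 2 = A₁ * C₂ ^ 2 * C₃ ^ 2 + A₂ * C₁ ^ 2 * C₃ ^ 2 + A₃ * C₁ ^ 2 * C₂ ^ 2

namespace LineIdentity

variable {a₄ a₆ M N A₁ A₂ A₃ C₁ C₂ C₃ : ℤ}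

open Polynomial in
theorem of_eq
    (hline : (C (C₁ ^ 2) * X - C A₁) * (C (C₂ ^ 2) * X - C A₂) * (C (C₃ ^ 2) * X - C A₃)
      = C ((C₁ * C₂ * C₃) ^ 2) * (X ^ 3 + C a₄ * X + C a₆) - (C M * X + C N) ^ 2) :
    LineIdentity a₄ a₆ M N A₁ A₂ A₃ C₁ C₂ C₃ := by
  have hzero := congrArg (eval 0) hline
  have hone := congrArg (eval 1) hline
  have hneg := congrArg (eval (-1)) hline
  simp only [eval_mul, eval_sub, eval_add, eval_pow, eval_C, eval_X] at hzero hone hneg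
  refine ⟨by linear_combination hzero, mul_left_cancel₀ two_ne_zero ?_,
    mul_left_cancel₀ two_ne_zero ?_⟩
  · linear_combination hone - hneg
  · linear_combination hone + hneg - 2 * hzero

theorem swap₁₂ (h : LineIdentity a₄ a₆ M N A₁ A₂ A₃ C₁ C₂ C₃) :
    LineIdentity a₄ a₆ M N A₂ A₁ A₃ C₂ C₁ C₃ :=
  ⟨by linear_combination h.coeff_zero, by linear_combination h.coeff_one,
    by linear_combination h.coeff_two⟩

theorem swap₂₃ (h : LineIdentity a₄ a₆ M N A₁ A₂ A₃ C₁ C₂ C₃) :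
    LineIdentity a₄ a₆ M N A₁ A₃ A₂ C₁ C₃ C₂ :=
  ⟨by linear_combination h.coeff_zero, by linear_combination h.coeff_one,
    by linear_combination h.coeff_two⟩

/-- The line identity at `x = A₁ / C₁²`, where its left side vanishes. -/
theorem ordinate_sq (h : LineIdentity a₄ a₆ M N A₁ A₂ A₃ C₁ C₂ C₃) {B₁ : ℤ} (hC₁ : C₁ ≠ 0)
    (hB₁ : B₁ ^ 2 = A₁ ^ 3 + a₄ * A₁ * C₁ ^ 4 + a₆ * C₁ ^ 6) :
    (M * A₁ + N * C₁ ^ 2) ^ 2 = (C₂ * C₃ * B₁) ^ 2 := by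
  refine mul_left_cancel₀ (pow_ne_zero 2 hC₁) ?_
  linear_combination (C₁ ^ 2 * A₁ ^ 2) * h.coeff_two + (A₁ * C₁ ^ 4) * h.coeff_one
    + C₁ ^ 6 * h.coeff_zero - (C₁ ^ 2 * C₂ ^ 2 * C₃ ^ 2) * hB₁

theorem dvd_ordinate (h : LineIdentity a₄ a₆ M N A₁ A₂ A₃ C₁ C₂ C₃) {B₁ : ℤ} (hC₁ : C₁ ≠ 0)
    (hB₁ : B₁ ^ 2 = A₁ ^ 3 + a₄ * A₁ * C₁ ^ 4 + a₆ * C₁ ^ 6) :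
    C₂ * C₃ ∣ M * A₁ + N * C₁ ^ 2 := by
  rcases sq_eq_sq_iff_eq_or_eq_neg.mp (h.ordinate_sq hC₁ hB₁) with hP | hP <;> rw [hP]
  · exact dvd_mul_right _ _
  · exact (dvd_mul_right _ _).neg_right

theorem not_prime_dvd_A₃ (h : LineIdentity a₄ a₆ M N A₁ A₂ A₃ C₁ C₂ C₃) {p : ℤ} (hp : Prime p)
    (hAC₁ : IsCoprime A₁ C₁) (hAC₂ : IsCoprime A₂ C₂) (hAC₃ : IsCoprime A₃ C₃)
    (hpC₁ : p ∣ C₁) (hpC₂ : p ∣ C₂) : ¬p ∣ A₃ := by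
  intro hpA₃
  have hpC₁' : p ∣ C₁ ^ 2 := dvd_pow hpC₁ two_ne_zero
  have hpC₂' : p ∣ C₂ ^ 2 := dvd_pow hpC₂ two_ne_zero
  have hpM : p ∣ M := by
    refine hp.dvd_of_dvd_pow (n := 2) ?_
    rw [h.coeff_two]
    exact dvd_add (dvd_add ((hpC₂'.mul_left _).mul_right _) ((hpC₁'.mul_left _).mul_right _))
      ((hpC₁'.mul_left _).mul_right _)
  have hpA₁A₂C₃ : p ∣ A₁ * A₂ * C₃ ^ 2 := by
    rw [show A₁ * A₂ * C₃ ^ 2 = (C₁ * C₂ * C₃) ^ 2 * a₄ - 2 * (M * N)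
        - A₁ * A₃ * C₂ ^ 2 - A₂ * A₃ * C₁ ^ 2 by linear_combination h.coeff_one]
    refine dvd_sub (dvd_sub (dvd_sub ?_ ((hpM.mul_right N).mul_left 2)) (hpC₂'.mul_left _))
      (hpC₁'.mul_left _)
    exact (dvd_pow ((hpC₁.mul_right C₂).mul_right C₃) two_ne_zero).mul_right a₄
  rcases hp.dvd_or_dvd hpA₁A₂C₃ with hpA₁A₂ | hpC₃
  · rcases hp.dvd_or_dvd hpA₁A₂ with hpA₁ | hpA₂
    · exact hp.not_isUnit (hAC₁.isUnit_of_dvd' hpA₁ hpC₁)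
    · exact hp.not_isUnit (hAC₂.isUnit_of_dvd' hpA₂ hpC₂)
  · exact hp.not_isUnit (hAC₃.isUnit_of_dvd' hpA₃ (hp.dvd_of_dvd_pow hpC₃))

theorem dvd_MN_add (h : LineIdentity a₄ a₆ M N A₁ A₂ A₃ C₁ C₂ C₃) {B₁ B₂ B₃ : ℤ}
    (hC₁ : C₁ ≠ 0) (hC₂ : C₂ ≠ 0) (hC₃ : C₃ ≠ 0)
    (hAC₁ : IsCoprime A₁ C₁) (hAC₂ : IsCoprime A₂ C₂) (hAC₃ : IsCoprime A₃ C₃)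
    (hB₁ : B₁ ^ 2 = A₁ ^ 3 + a₄ * A₁ * C₁ ^ 4 + a₆ * C₁ ^ 6)
    (hB₂ : B₂ ^ 2 = A₂ ^ 3 + a₄ * A₂ * C₂ ^ 4 + a₆ * C₂ ^ 6)
    (hB₃ : B₃ ^ 2 = A₃ ^ 3 + a₄ * A₃ * C₃ ^ 4 + a₆ * C₃ ^ 6) :
    C₁ * C₂ ∣ M * N + A₁ * A₂ * C₃ ^ 2 := by
  have hP₁ : C₂ ∣ M * A₁ + N * C₁ ^ 2 := (dvd_mul_right _ _).trans (h.dvd_ordinate hC₁ hB₁)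
  have hP₂ : C₁ ∣ M * A₂ + N * C₂ ^ 2 := (dvd_mul_right _ _).trans (h.swap₁₂.dvd_ordinate hC₂ hB₂)
  have hP₃ : C₁ * C₂ ∣ M * A₃ + N * C₃ ^ 2 := h.swap₂₃.swap₁₂.dvd_ordinate hC₃ hB₃
  refine dvd_of_dvd_mul_of_dvd_mul (mul_ne_zero hC₁ hC₂) (x := A₁ * C₂ ^ 2 + A₂ * C₁ ^ 2)
    (y := A₃) ?_ ?_ ?_
  · rw [show (A₁ * C₂ ^ 2 + A₂ * C₁ ^ 2) * (M * N + A₁ * A₂ * C₃ ^ 2)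
        = (M * A₂ + N * C₂ ^ 2) * (M * A₁ + N * C₁ ^ 2)
          - C₁ * C₂ * ((N ^ 2 + A₁ * A₂ * A₃) * (C₁ * C₂)) by
        linear_combination (-(A₁ * A₂)) * h.coeff_two]
    exact dvd_sub (mul_dvd_mul hP₂ hP₁) (dvd_mul_right _ _)
  · rw [show A₃ * (M * N + A₁ * A₂ * C₃ ^ 2)
        = N * (M * A₃ + N * C₃ ^ 2) - C₁ * C₂ * (C₁ * C₂ * C₃ ^ 4 * a₆) by
        linear_combination (-C₃ ^ 2) * h.coeff_zero]
    exact dvd_sub (hP₃.mul_left N) (dvd_mul_right _ _)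
  · intro p hp hpC hpm hpA₃
    have hp_of_coprime {A C C' : ℤ} (hAC : IsCoprime A C) (hpC : p ∣ C) (hpAC' : p ∣ A * C' ^ 2) :
        p ∣ C' :=
      hp.dvd_of_dvd_pow ((hp.dvd_or_dvd hpAC').resolve_left
        fun hpA => hp.not_isUnit (hAC.isUnit_of_dvd' hpA hpC))
    have hpC₁₂ : p ∣ C₁ ∧ p ∣ C₂ := by
      rcases hp.dvd_or_dvd hpC with hpC₁ | hpC₂
      · refine ⟨hpC₁, hp_of_coprime hAC₁ hpC₁ ((dvd_add_left ?_).mp hpm)⟩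
        exact (dvd_pow hpC₁ two_ne_zero).mul_left A₂
      · refine ⟨hp_of_coprime hAC₂ hpC₂ ((dvd_add_right ?_).mp hpm), hpC₂⟩
        exact (dvd_pow hpC₂ two_ne_zero).mul_left A₁
    exact h.not_prime_dvd_A₃ hp hAC₁ hAC₂ hAC₃ hpC₁₂.1 hpC₁₂.2 hpA₃

/-- The line identity at `x = -u / v`, cleared of denominators. -/
theorem mul_sq_sub_prod (h : LineIdentity a₄ a₆ M N A₁ A₂ A₃ C₁ C₂ C₃) (u v : ℤ) :
    v * (N * v - M * u) ^ 2 - (A₁ * v + C₁ ^ 2 * u) * (A₂ * v + C₂ ^ 2 * u) * (A₃ * v + C₃ ^ 2 * u)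
      = -((C₁ * C₂ * C₃) ^ 2 * (u ^ 3 + a₄ * u * v ^ 2 - a₆ * v ^ 3)) := by
  linear_combination v ^ 3 * h.coeff_zero - u * v ^ 2 * h.coeff_one + u ^ 2 * v * h.coeff_two

theorem cubeEntry_eq (h : LineIdentity a₄ a₆ M N A₁ A₂ A₃ C₁ C₂ C₃)
    {u v a₁ a₂ a₃ b g₂ g₃ μ₂ μ₃ l₂ l₃ Q₂ Q₃ t₂ t₃ : ℤ}
    (ht₂ : M * N + A₁ * A₂ * C₃ ^ 2 = C₁ * C₂ * t₂) (ht₃ : M * N + A₁ * A₃ * C₂ ^ 2 = C₁ * C₃ * t₃)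
    (ha₁ : a₁ = A₁ * v + C₁ ^ 2 * u) (ha₂ : a₂ = A₂ * v + C₂ ^ 2 * u)
    (ha₃ : a₃ = A₃ * v + C₃ ^ 2 * u) (hb : b = N * v - M * u)
    (hμ₂ : C₂ ^ 3 * μ₂ + v * a₂ * l₂ = g₂ ^ 2) (hμ₃ : C₃ ^ 3 * μ₃ + v * a₃ * l₃ = g₃ ^ 2)
    (hQ₂ : Q₂ = b * v * l₂ - M * C₂ * μ₂) (hQ₃ : Q₃ = b * v * l₃ - M * C₃ * μ₃) :
    v * Q₂ * Q₃ - a₁ * g₂ ^ 2 * g₃ ^ 2 = C₁ * C₂ * C₃ *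
      (v * v * C₃ * (-(C₁ * C₂ * (u ^ 3 + a₄ * u * v ^ 2 - a₆ * v ^ 3) * l₂ * l₃))
        + C₁ * v * C₃ * (A₂ * C₃ * μ₂ * μ₃ - u * (u * C₂ ^ 2 - v * A₂) * l₃ * μ₂)
        + C₁ * C₂ * v * (A₃ * C₂ * μ₂ * μ₃ - u * (u * C₃ ^ 2 - v * A₃) * l₂ * μ₃)
        + C₁ * C₂ * C₃ * (-(u * C₂ * C₃ * μ₂ * μ₃))
        + v * v * v * (-(t₂ * l₂ * μ₃ + t₃ * l₃ * μ₂))) := by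
  have hexpand : v * Q₂ * Q₃ - a₁ * g₂ ^ 2 * g₃ ^ 2
      = v ^ 2 * l₂ * l₃ * (v * b ^ 2 - a₁ * a₂ * a₃)
        + C₂ * C₃ * μ₂ * μ₃ * (v * M ^ 2 - a₁ * C₂ ^ 2 * C₃ ^ 2)
        - v * C₃ * l₂ * μ₃ * (v * b * M + a₁ * a₂ * C₃ ^ 2)
        - v * C₂ * l₃ * μ₂ * (v * b * M + a₁ * a₃ * C₂ ^ 2) := by
    rw [hQ₂, hQ₃, ← hμ₂, ← hμ₃]
    ring
  have hll : v * b ^ 2 - a₁ * a₂ * a₃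
      = -((C₁ * C₂ * C₃) ^ 2 * (u ^ 3 + a₄ * u * v ^ 2 - a₆ * v ^ 3)) := by
    rw [ha₁, ha₂, ha₃, hb]
    exact h.mul_sq_sub_prod u v
  have hμμ : v * M ^ 2 - a₁ * C₂ ^ 2 * C₃ ^ 2
      = C₁ ^ 2 * (v * A₂ * C₃ ^ 2 + v * A₃ * C₂ ^ 2 - u * C₂ ^ 2 * C₃ ^ 2) := by
    rw [ha₁]
    linear_combination v * h.coeff_two
  have hlμ₂ : v * b * M + a₁ * a₂ * C₃ ^ 2
      = C₁ * C₂ * (v ^ 2 * t₂ + C₁ * C₂ * u * (u * C₃ ^ 2 - v * A₃)) := by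
    rw [ha₁, ha₂, hb]
    linear_combination v ^ 2 * ht₂ - u * v * h.coeff_two
  have hlμ₃ : v * b * M + a₁ * a₃ * C₂ ^ 2
      = C₁ * C₃ * (v ^ 2 * t₃ + C₁ * C₃ * u * (u * C₂ ^ 2 - v * A₂)) := by
    rw [ha₁, ha₃, hb]
    linear_combination v ^ 2 * ht₃ - u * v * h.coeff_two
  rw [hexpand, hll, hμμ, hlμ₂, hlμ₃]
  ring

theorem dvd_cubeEntry (h : LineIdentity a₄ a₆ M N A₁ A₂ A₃ C₁ C₂ C₃) {B₁ B₂ B₃ : ℤ}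
    (hC₁ : C₁ ≠ 0) (hC₂ : C₂ ≠ 0) (hC₃ : C₃ ≠ 0)
    (hAC₁ : IsCoprime A₁ C₁) (hAC₂ : IsCoprime A₂ C₂) (hAC₃ : IsCoprime A₃ C₃)
    (hB₁ : B₁ ^ 2 = A₁ ^ 3 + a₄ * A₁ * C₁ ^ 4 + a₆ * C₁ ^ 6)
    (hB₂ : B₂ ^ 2 = A₂ ^ 3 + a₄ * A₂ * C₂ ^ 4 + a₆ * C₂ ^ 6)
    (hB₃ : B₃ ^ 2 = A₃ ^ 3 + a₄ * A₃ * C₃ ^ 4 + a₆ * C₃ ^ 6)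
    {u v a₁ a₂ a₃ b g₁ g₂ g₃ μ₂ μ₃ l₂ l₃ Q₂ Q₃ : ℤ}
    (ha₁ : a₁ = A₁ * v + C₁ ^ 2 * u) (ha₂ : a₂ = A₂ * v + C₂ ^ 2 * u)
    (ha₃ : a₃ = A₃ * v + C₃ ^ 2 * u) (hb : b = N * v - M * u)
    (hg₁C : g₁ ∣ C₁) (hg₂C : g₂ ∣ C₂) (hg₃C : g₃ ∣ C₃)
    (hg₁v : g₁ ∣ v) (hg₂v : g₂ ∣ v) (hg₃v : g₃ ∣ v)
    (hμ₂ : C₂ ^ 3 * μ₂ + v * a₂ * l₂ = g₂ ^ 2) (hμ₃ : C₃ ^ 3 * μ₃ + v * a₃ * l₃ = g₃ ^ 2)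
    (hQ₂ : Q₂ = b * v * l₂ - M * C₂ * μ₂) (hQ₃ : Q₃ = b * v * l₃ - M * C₃ * μ₃) :
    C₁ * C₂ * C₃ * (g₁ * g₂ * g₃) ∣ v * Q₂ * Q₃ - a₁ * g₂ ^ 2 * g₃ ^ 2 := by
  obtain ⟨t₂, ht₂⟩ := h.dvd_MN_add hC₁ hC₂ hC₃ hAC₁ hAC₂ hAC₃ hB₁ hB₂ hB₃
  obtain ⟨t₃, ht₃⟩ := h.swap₂₃.dvd_MN_add hC₁ hC₃ hC₂ hAC₁ hAC₃ hAC₂ hB₁ hB₃ hB₂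
  have hG {x₁ x₂ x₃ : ℤ} (r : ℤ) (h₁ : g₁ ∣ x₁) (h₂ : g₂ ∣ x₂) (h₃ : g₃ ∣ x₃) :
      g₁ * g₂ * g₃ ∣ x₁ * x₂ * x₃ * r :=
    (mul_dvd_mul (mul_dvd_mul h₁ h₂) h₃).mul_right r
  rw [h.cubeEntry_eq ht₂ ht₃ ha₁ ha₂ ha₃ hb hμ₂ hμ₃ hQ₂ hQ₃]
  exact mul_dvd_mul_left _ <| dvd_add (dvd_add (dvd_add (dvd_add (hG _ hg₁v hg₂v hg₃C)
    (hG _ hg₁C hg₂v hg₃C)) (hG _ hg₁C hg₂C hg₃v)) (hG _ hg₁C hg₂C hg₃C)) (hG _ hg₁v hg₂v hg₃v)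

end LineIdentity

open Polynomial in
theorem stmt_10_general (a₄ a₆ u v : ℤ)
    (A₁ A₂ A₃ B₁ B₂ B₃ C₁ C₂ C₃ : ℤ)
    (hC₁ : 1 ≤ C₁) (hC₂ : 1 ≤ C₂) (hC₃ : 1 ≤ C₃)
    (hAC₁ : Int.gcd A₁ C₁ = 1) (hAC₂ : Int.gcd A₂ C₂ = 1) (hAC₃ : Int.gcd A₃ C₃ = 1)
    (hB₁ : B₁ ^ 2 = A₁ ^ 3 + a₄ * A₁ * C₁ ^ 4 + a₆ * C₁ ^ 6)
    (hB₂ : B₂ ^ 2 = A₂ ^ 3 + a₄ * A₂ * C₂ ^ 4 + a₆ * C₂ ^ 6)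
    (hB₃ : B₃ ^ 2 = A₃ ^ 3 + a₄ * A₃ * C₃ ^ 4 + a₆ * C₃ ^ 6)
    (M N Cp : ℤ) (hCp : Cp = C₁ * C₂ * C₃)
    (hline : (C (C₁ ^ 2) * X - C A₁) * (C (C₂ ^ 2) * X - C A₂) * (C (C₃ ^ 2) * X - C A₃)
      = C (Cp ^ 2) * (X ^ 3 + C a₄ * X + C a₆) - (C M * X + C N) ^ 2)
    (a₁ a₂ a₃ b g₁ g₂ g₃ : ℤ)
    (ha₁ : a₁ = A₁ * v + C₁ ^ 2 * u) (ha₂ : a₂ = A₂ * v + C₂ ^ 2 * u)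
    (ha₃ : a₃ = A₃ * v + C₃ ^ 2 * u) (hb : b = N * v - M * u)
    (hg₁ : g₁ = Int.gcd C₁ v) (hg₂ : g₂ = Int.gcd C₂ v) (hg₃ : g₃ = Int.gcd C₃ v)
    (μ₁ μ₂ μ₃ l₁ l₂ l₃ : ℤ)
    (hμ₁ : C₁ ^ 3 * μ₁ + v * a₁ * l₁ = g₁ ^ 2)
    (hμ₂ : C₂ ^ 3 * μ₂ + v * a₂ * l₂ = g₂ ^ 2)
    (hμ₃ : C₃ ^ 3 * μ₃ + v * a₃ * l₃ = g₃ ^ 2)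
    (Q₁ Q₂ Q₃ : ℤ)
    (hQ₁ : Q₁ = b * v * l₁ - M * C₁ * μ₁)
    (hQ₂ : Q₂ = b * v * l₂ - M * C₂ * μ₂)
    (hQ₃ : Q₃ = b * v * l₃ - M * C₃ * μ₃) :
    Cp * (g₁ * g₂ * g₃) ∣ v * Q₂ * Q₃ - a₁ * g₂ ^ 2 * g₃ ^ 2 ∧
    Cp * (g₁ * g₂ * g₃) ∣ v * Q₁ * Q₃ - a₂ * g₁ ^ 2 * g₃ ^ 2 ∧
    Cp * (g₁ * g₂ * g₃) ∣ v * Q₁ * Q₂ - a₃ * g₁ ^ 2 * g₂ ^ 2 := by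
  subst hCp hg₁ hg₂ hg₃
  have h := LineIdentity.of_eq hline
  have hC₁' : C₁ ≠ 0 := by positivity
  have hC₂' : C₂ ≠ 0 := by positivity
  have hC₃' : C₃ ≠ 0 := by positivity
  rw [← Int.isCoprime_iff_gcd_eq_one] at hAC₁ hAC₂ hAC₃
  have hgC (x : ℤ) : (Int.gcd x v : ℤ) ∣ x := Int.gcd_dvd_left _ _
  have hgv (x : ℤ) : (Int.gcd x v : ℤ) ∣ v := Int.gcd_dvd_right _ _
  refine ⟨?_, ?_, ?_⟩
  · exact h.dvd_cubeEntry hC₁' hC₂' hC₃' hAC₁ hAC₂ hAC₃ hB₁ hB₂ hB₃ ha₁ ha₂ ha₃ hb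
      (hgC _) (hgC _) (hgC _) (hgv _) (hgv _) (hgv _) hμ₂ hμ₃ hQ₂ hQ₃
  · convert h.swap₁₂.dvd_cubeEntry hC₂' hC₁' hC₃' hAC₂ hAC₁ hAC₃ hB₂ hB₁ hB₃ ha₂ ha₁ ha₃ hb
      (hgC _) (hgC _) (hgC _) (hgv _) (hgv _) (hgv _) hμ₁ hμ₃ hQ₁ hQ₃ using 1
    ring
  · convert h.swap₂₃.swap₁₂.dvd_cubeEntry hC₃' hC₁' hC₂' hAC₃ hAC₁ hAC₂ hB₃ hB₁ hB₂ ha₃ ha₁ ha₂ hb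
      (hgC _) (hgC _) (hgC _) (hgv _) (hgv _) (hgv _) hμ₁ hμ₂ hQ₁ hQ₂ using 1
    ring

open Polynomial in
theorem stmt_10 (a₄ a₆ u v : ℤ) (hu : 0 < u) (hv : 0 < v) (hvsf : Squarefree v)
    (huv : Int.gcd u v = 1)
    (A₁ A₂ A₃ B₁ B₂ B₃ C₁ C₂ C₃ : ℤ)
    (hC₁ : 1 ≤ C₁) (hC₂ : 1 ≤ C₂) (hC₃ : 1 ≤ C₃)
    (hAC₁ : Int.gcd A₁ C₁ = 1) (hAC₂ : Int.gcd A₂ C₂ = 1) (hAC₃ : Int.gcd A₃ C₃ = 1)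
    (hBC₁ : Int.gcd B₁ C₁ = 1) (hBC₂ : Int.gcd B₂ C₂ = 1) (hBC₃ : Int.gcd B₃ C₃ = 1)
    (hB₁ : B₁ ^ 2 = A₁ ^ 3 + a₄ * A₁ * C₁ ^ 4 + a₆ * C₁ ^ 6)
    (hB₂ : B₂ ^ 2 = A₂ ^ 3 + a₄ * A₂ * C₂ ^ 4 + a₆ * C₂ ^ 6)
    (hB₃ : B₃ ^ 2 = A₃ ^ 3 + a₄ * A₃ * C₃ ^ 4 + a₆ * C₃ ^ 6)
    (M N Cp : ℤ) (hCp : Cp = C₁ * C₂ * C₃)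
    (hline : (C (C₁ ^ 2) * X - C A₁) * (C (C₂ ^ 2) * X - C A₂) * (C (C₃ ^ 2) * X - C A₃)
      = C (Cp ^ 2) * (X ^ 3 + C a₄ * X + C a₆) - (C M * X + C N) ^ 2)
    (a₁ a₂ a₃ b g₁ g₂ g₃ : ℤ)
    (ha₁ : a₁ = A₁ * v + C₁ ^ 2 * u) (ha₂ : a₂ = A₂ * v + C₂ ^ 2 * u)
    (ha₃ : a₃ = A₃ * v + C₃ ^ 2 * u) (hb : b = N * v - M * u)
    (hg₁ : g₁ = Int.gcd C₁ v) (hg₂ : g₂ = Int.gcd C₂ v) (hg₃ : g₃ = Int.gcd C₃ v)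
    (μ₁ μ₂ μ₃ l₁ l₂ l₃ : ℤ)
    (hμ₁ : C₁ ^ 3 * μ₁ + v * a₁ * l₁ = g₁ ^ 2)
    (hμ₂ : C₂ ^ 3 * μ₂ + v * a₂ * l₂ = g₂ ^ 2)
    (hμ₃ : C₃ ^ 3 * μ₃ + v * a₃ * l₃ = g₃ ^ 2)
    (Q₁ Q₂ Q₃ : ℤ)
    (hQ₁ : Q₁ = b * v * l₁ - M * C₁ * μ₁)
    (hQ₂ : Q₂ = b * v * l₂ - M * C₂ * μ₂)
    (hQ₃ : Q₃ = b * v * l₃ - M * C₃ * μ₃) :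
    Cp * (g₁ * g₂ * g₃) ∣ v * Q₂ * Q₃ - a₁ * g₂ ^ 2 * g₃ ^ 2 ∧
    Cp * (g₁ * g₂ * g₃) ∣ v * Q₁ * Q₃ - a₂ * g₁ ^ 2 * g₃ ^ 2 ∧
    Cp * (g₁ * g₂ * g₃) ∣ v * Q₁ * Q₂ - a₃ * g₁ ^ 2 * g₂ ^ 2 :=
  stmt_10_general a₄ a₆ u v A₁ A₂ A₃ B₁ B₂ B₃ C₁ C₂ C₃ hC₁ hC₂ hC₃ hAC₁ hAC₂ hAC₃ hB₁ hB₂ hB₃ M N Cp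
    hCp hline a₁ a₂ a₃ b g₁ g₂ g₃ ha₁ ha₂ ha₃ hb hg₁ hg₂ hg₃ μ₁ μ₂ μ₃ l₁ l₂ l₃ hμ₁ hμ₂ hμ₃ Q₁ Q₂ Q₃
    hQ₁ hQ₂ hQ₃
end

section
/- Let u, v be positive integers with v squarefree, let A, C be integers with C ≥ 1, let a := Av + C²u be a positive integer, let g := gcd(C, v), and let d be a positive integer. Suppose there exist coprime integers α, γ such that v·a = g²(α² + d·γ²). Then either v divides C, or v·a ≥ g²·d. -/
/-! If `γ = 0` then coprimality forces `α = ±1`, so `v · a = g²`; squarefreeness of `v` upgrades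
`v ∣ g²` to `v ∣ g`, and `g ∣ C`. If `γ ≠ 0` then `γ² ≥ 1`, so `α² + dγ² ≥ d`. -/

lemma Int.le_sq_add_mul_sq {α γ d : ℤ} (hd : 0 ≤ d) (hγ : γ ≠ 0) : d ≤ α ^ 2 + d * γ ^ 2 := by
  have hγ2 : 1 ≤ γ ^ 2 := by
    have := pow_pos (abs_pos.mpr hγ) 2
    rw [sq_abs] at this
    omega
  nlinarith [sq_nonneg α]

theorem stmt_12_general (v C : ℤ) (hvsf : Squarefree v)
    (a g d : ℤ)
    (hg : g = Int.gcd C v) (hd : 0 < d)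
    (α γ : ℤ) (hcop : IsCoprime α γ) (hrep : v * a = g ^ 2 * (α ^ 2 + d * γ ^ 2)) :
    v ∣ C ∨ g ^ 2 * d ≤ v * a := by
  rcases eq_or_ne γ 0 with rfl | hγ
  · left
    have hα : α ^ 2 = 1 := Int.isUnit_sq (isCoprime_zero_right.mp hcop)
    have hvg : v ∣ g := (hvsf.dvd_pow_iff_dvd two_ne_zero).mp ⟨a, by rw [hrep, hα]; ring⟩
    exact hvg.trans (hg ▸ Int.gcd_dvd_left _ _)
  · right
    rw [hrep]
    exact mul_le_mul_of_nonneg_left (Int.le_sq_add_mul_sq hd.le hγ) (sq_nonneg g)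

/-- Arithmetic core of part (2) of Theorem 2.4: if `v·a = g²(α² + dγ²)` with
`gcd(α, γ) = 1`, then `v ∣ C` or `v·a ≥ g²·d`. -/
theorem stmt_12 (u v A C : ℤ) (hu : 0 < u) (hv : 0 < v) (hvsf : Squarefree v)
    (hC : 1 ≤ C) (a g d : ℤ) (ha : a = A * v + C ^ 2 * u) (ha0 : 0 < a)
    (hg : g = Int.gcd C v) (hd : 0 < d)
    (α γ : ℤ) (hcop : IsCoprime α γ) (hrep : v * a = g ^ 2 * (α ^ 2 + d * γ ^ 2)) :
    v ∣ C ∨ g ^ 2 * d ≤ v * a :=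
  stmt_12_general v C hvsf a g d hg hd α γ hcop hrep
end

section
/- Let ε' > 0, let n, k₁, k₂, k₃ be nonnegative real numbers, and set C₀ := 1 + k₁ + k₂ + k₃. If x and y are real numbers with x, y ≥ 1 satisfying y(x³ + k₁x²y + k₂xy² + k₃y³) ≥ (y³(x + (n+1)y))^(1+ε'), then either x ≤ y and y^(4ε') ≤ C₀/(n+1), or x > y and y^(1+ε') ≤ (C₀/(n+1))^(1/3)·x. -/
/-!
Write `B = y³(x + (n+1)y)` and `G = y(x³ + k₁x²y + k₂xy² + k₃y³)`. From below,
`B ≥ (n+1)y⁴` gives `B^(1+ε') ≥ (n+1)·y^(4(1+ε'))`; from above, each monomial of the cubic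
is at most `max(x, y)³`, so `G ≤ C₀·y·max(x, y)³`. For `x ≤ y` comparing the two bounds
leaves `(n+1)·y^(4ε') ≤ C₀`. For `x > y` they give `(n+1)·y^(4+4ε') ≤ C₀·x³y`, and since
`y ≥ 1` we may lower the exponent to `4 + 3ε'`, i.e. `(n+1)·(y^(1+ε'))³ ≤ C₀·x³`; take cube
roots.
-/

open Real

lemma cubic_form_le_coeff_sum_mul_pow_three {k₁ k₂ k₃ x y m : ℝ}
    (hk₁ : 0 ≤ k₁) (hk₂ : 0 ≤ k₂) (hk₃ : 0 ≤ k₃) (hx : 0 ≤ x) (hy : 0 ≤ y)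
    (hxm : x ≤ m) (hym : y ≤ m) :
    x ^ 3 + k₁ * x ^ 2 * y + k₂ * x * y ^ 2 + k₃ * y ^ 3 ≤ (1 + k₁ + k₂ + k₃) * m ^ 3 := by
  have hm : 0 ≤ m := hx.trans hxm
  have h₀ : x ^ 3 ≤ m ^ 3 := by gcongr
  have h₁ : x ^ 2 * y ≤ m ^ 2 * m := by gcongr
  have h₂ : x * y ^ 2 ≤ m * m ^ 2 := by gcongr
  have h₃ : y ^ 3 ≤ m ^ 3 := by gcongr
  nlinarith [mul_le_mul_of_nonneg_left h₁ hk₁, mul_le_mul_of_nonneg_left h₂ hk₂,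
    mul_le_mul_of_nonneg_left h₃ hk₃]

lemma add_one_mul_rpow_le_rpow_mul_pow_three {n x y ε : ℝ} (hn : 0 ≤ n) (hx : 0 ≤ x)
    (hy : 0 ≤ y) (hε : 0 ≤ ε) :
    (n + 1) * y ^ (4 * (1 + ε)) ≤ (y ^ 3 * (x + (n + 1) * y)) ^ (1 + ε) :=
  calc (n + 1) * y ^ (4 * (1 + ε))
      = (n + 1) * (y ^ 4) ^ (1 + ε) := by rw [← rpow_natCast_mul hy, Nat.cast_ofNat]
    _ ≤ (n + 1) ^ (1 + ε) * (y ^ 4) ^ (1 + ε) := by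
        gcongr
        exact self_le_rpow_of_one_le (by linarith) (by linarith)
    _ = ((n + 1) * y ^ 4) ^ (1 + ε) := (mul_rpow (by linarith) (by positivity)).symm
    _ ≤ (y ^ 3 * (x + (n + 1) * y)) ^ (1 + ε) := by
        gcongr ?_ ^ _
        nlinarith [mul_nonneg (pow_nonneg hy 3) hx]

lemma le_rpow_inv_mul_of_pow_le_mul_pow {a b c : ℝ} {k : ℕ} (hk : k ≠ 0) (hb : 0 ≤ b)
    (hc : 0 ≤ c) (h : a ^ k ≤ c * b ^ k) : a ≤ c ^ (k⁻¹ : ℝ) * b := by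
  refine le_of_pow_le_pow_left₀ hk (by positivity) ?_
  rwa [mul_pow, rpow_inv_natCast_pow hc hk]

/-- Key dichotomy in the proof of Lemma 4.2 (failure of upper bound-suitability):
if `y(x³ + k₁x²y + k₂xy² + k₃y³) ≥ (y³(x + (n+1)y))^(1+ε')` with `x, y ≥ 1`, then
either `x ≤ y` and `y^(4ε') ≤ C₀/(n+1)`, or `x > y` and
`y^(1+ε') ≤ (C₀/(n+1))^(1/3)·x`, where `C₀ = 1 + k₁ + k₂ + k₃`. -/
theorem stmt_14 (ε' n k₁ k₂ k₃ : ℝ) (hε' : 0 < ε') (hn : 0 ≤ n)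
    (hk₁ : 0 ≤ k₁) (hk₂ : 0 ≤ k₂) (hk₃ : 0 ≤ k₃)
    (C₀ : ℝ) (hC₀ : C₀ = 1 + k₁ + k₂ + k₃)
    (x y : ℝ) (hx : 1 ≤ x) (hy : 1 ≤ y)
    (h : (y ^ 3 * (x + (n + 1) * y)) ^ (1 + ε')
      ≤ y * (x ^ 3 + k₁ * x ^ 2 * y + k₂ * x * y ^ 2 + k₃ * y ^ 3)) :
    (x ≤ y ∧ y ^ (4 * ε') ≤ C₀ / (n + 1)) ∨
    (y < x ∧ y ^ (1 + ε') ≤ (C₀ / (n + 1)) ^ ((1 : ℝ) / 3) * x) := by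
  subst hC₀
  have hy₀ : 0 < y := by linarith
  have hn₁ : 0 < n + 1 := by linarith
  have hlow := add_one_mul_rpow_le_rpow_mul_pow_three hn (by linarith) hy₀.le hε'.le |>.trans h
  have hup {m : ℝ} (hxm : x ≤ m) (hym : y ≤ m) :=
    mul_le_mul_of_nonneg_left
      (cubic_form_le_coeff_sum_mul_pow_three hk₁ hk₂ hk₃ (by linarith) hy₀.le hxm hym) hy₀.le
  rcases le_or_gt x y with hxy | hxy
  · refine .inl ⟨hxy, (le_div_iff₀' hn₁).2 <| le_of_mul_le_mul_left ?_ (pow_pos hy₀ 4)⟩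
    calc y ^ 4 * ((n + 1) * y ^ (4 * ε')) = (n + 1) * y ^ (4 * (1 + ε')) := by
          rw [mul_one_add, rpow_add hy₀, rpow_ofNat]; ring
      _ ≤ y * ((1 + k₁ + k₂ + k₃) * y ^ 3) := hlow.trans (hup hxy le_rfl)
      _ = y ^ 4 * (1 + k₁ + k₂ + k₃) := by ring
  · refine .inr ⟨hxy, ?_⟩
    have hexp : y * (y ^ (1 + ε')) ^ 3 ≤ y ^ (4 * (1 + ε')) :=
      calc y * (y ^ (1 + ε')) ^ 3 = y ^ (1 + (1 + ε') * 3) := by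
            rw [rpow_add hy₀ 1 ((1 + ε') * 3), rpow_one, ← rpow_mul_natCast hy₀.le, Nat.cast_ofNat]
        _ ≤ y ^ (4 * (1 + ε')) := rpow_le_rpow_of_exponent_le hy (by linarith)
    have hcube : (y ^ (1 + ε')) ^ 3 ≤ (1 + k₁ + k₂ + k₃) / (n + 1) * x ^ 3 := by
      rw [div_mul_eq_mul_div, le_div_iff₀' hn₁]
      refine le_of_mul_le_mul_left ?_ hy₀
      calc y * ((n + 1) * (y ^ (1 + ε')) ^ 3) = (n + 1) * (y * (y ^ (1 + ε')) ^ 3) := by ring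
        _ ≤ (n + 1) * y ^ (4 * (1 + ε')) := by gcongr
        _ ≤ y * ((1 + k₁ + k₂ + k₃) * x ^ 3) := hlow.trans (hup le_rfl hxy.le)
    simpa only [one_div, Nat.cast_ofNat] using
      le_rpow_inv_mul_of_pow_le_mul_pow three_ne_zero (by linarith) (by positivity) hcube
end

section
/- Let a₄, a₆ be integers, fix 0 < ε < 1/2 and set ε' := ε/(1−ε), and fix real constants K > 0 and A₀ ≥ 0. For a positive integer n and positive integers x, y, set G_n(x, y) := y((x+ny)³ + a₄(x+ny)y² − a₆y³), and say that (x, y) fails at level n if at least one of the following does not hold: (1) y ≥ 2 and G_n(x, y) > y(x + (n + A₀)y); (2) G_n(x, y) > K·(y(x + (n+1)y))^(1+ε'); (3) G_n(x, y) < (y³(x + (n+1)y))^(1+ε'). Then there exists N > 0 such that for every integer n > N: (a) for all positive integers x, y one has G_n(x, y) > 0 and 3(x+ny)² + a₄y² > 0; and (b) there exists a constant c > 0 such that for all real Y ≥ 2, the number of integer pairs (x, y) with 0 < x, y < Y that fail at level n is at most c·Y^(2−ε). -/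
/-!
Write `t = x + n y`. Once `n ≥ 2(|a₄| + |a₆|) + 1`, the lower-order terms `a₄ t y² - a₆ y³` are
at most `t³ / 2` in absolute value, so `y t³ / 2 ≤ G_n(x, y) ≤ 2 y t³`. With `n` also large
compared with `K` and `A₀`, this gives (1) and (2) for every pair with `y ≥ 2`, and (3) as soon
as `y^ε' ≥ 16 n` and `x ≤ y^(1+ε')` (then `t ≤ 2 y^(1+ε')`). Since `(1 - ε)(1 + ε') = 1`,
a failing pair has `y = O(1)` or `y < x^(1-ε) < Y^(1-ε)`, so there are `O(Y · Y^(1-ε))` of them.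
-/

/-- The form `d_E(u, v)` of the paper, so that `G_n(x, y) = dE a₄ a₆ (x + n * y) y`. -/
def dE {R : Type*} [CommRing R] (a b u v : R) : R := v * (u ^ 3 + a * u * v ^ 2 - b * v ^ 3)

section OrderedRing

variable {R : Type*} [CommRing R] [LinearOrder R] [IsStrictOrderedRing R] {a b m t w : R}

theorem two_mul_abs_sub_le_cube (hm : 2 * (|a| + |b|) + 1 ≤ m) (hw : 0 ≤ w)
    (ht : m * w ≤ t) : 2 * |a * t * w ^ 2 - b * w ^ 3| ≤ t ^ 3 := by
  have hm1 : 1 ≤ m := by linarith [abs_nonneg a, abs_nonneg b]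
  have hwt : w ≤ t := by nlinarith
  have ht0 : 0 ≤ t := hw.trans hwt
  have hsq : 2 * (|a| + |b|) * w ^ 2 ≤ t ^ 2 := by
    have := pow_le_pow_left₀ (by positivity) ht 2
    nlinarith [mul_le_mul_of_nonneg_right (le_self_pow₀ hm1 two_ne_zero) (sq_nonneg w)]
  have htri : |a * t * w ^ 2 - b * w ^ 3| ≤ (|a| + |b|) * (t * w ^ 2) :=
    calc |a * t * w ^ 2 - b * w ^ 3| ≤ |a| * (t * w ^ 2) + |b| * w ^ 3 := by
          refine (abs_sub _ _).trans (le_of_eq ?_)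
          rw [mul_assoc, abs_mul a, abs_mul b, abs_of_nonneg (by positivity : 0 ≤ t * w ^ 2),
            abs_of_nonneg (by positivity : 0 ≤ w ^ 3)]
      _ ≤ (|a| + |b|) * (t * w ^ 2) := by
          nlinarith [mul_le_mul_of_nonneg_left hwt (mul_nonneg (abs_nonneg b) (sq_nonneg w))]
  nlinarith [mul_le_mul_of_nonneg_left hsq ht0]

theorem mul_cube_le_two_mul_dE (hm : 2 * (|a| + |b|) + 1 ≤ m) (hw : 0 ≤ w)
    (ht : m * w ≤ t) : w * t ^ 3 ≤ 2 * dE a b t w := by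
  have hbound := mul_le_mul_of_nonneg_left (two_mul_abs_sub_le_cube hm hw ht) hw
  have hlower := mul_le_mul_of_nonneg_left (neg_abs_le (a * t * w ^ 2 - b * w ^ 3)) hw
  unfold dE
  nlinarith

theorem dE_le_two_mul_mul_cube (hm : 2 * (|a| + |b|) + 1 ≤ m) (hw : 0 ≤ w)
    (ht : m * w ≤ t) : dE a b t w ≤ 2 * w * t ^ 3 := by
  have hbound := mul_le_mul_of_nonneg_left (two_mul_abs_sub_le_cube hm hw ht) hw
  have hupper := mul_le_mul_of_nonneg_left (le_abs_self (a * t * w ^ 2 - b * w ^ 3)) hw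
  unfold dE
  nlinarith [mul_nonneg hw (abs_nonneg (a * t * w ^ 2 - b * w ^ 3))]

theorem dE_pos (hm : 2 * (|a| + |b|) + 1 ≤ m) (hw : 0 < w) (ht : m * w ≤ t) :
    0 < dE a b t w := by
  have ht0 : 0 < t := by nlinarith [abs_nonneg a, abs_nonneg b]
  nlinarith [mul_cube_le_two_mul_dE hm hw.le ht, mul_pos hw (pow_pos ht0 3)]

theorem three_mul_sq_add_pos (hm : 2 * (|a| + |b|) + 1 ≤ m) (hw : 0 < w) (ht : m * w ≤ t) :
    0 < 3 * t ^ 2 + a * w ^ 2 := by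
  have hm1 : 1 ≤ m := by linarith [abs_nonneg a, abs_nonneg b]
  have hsq := pow_le_pow_left₀ (by positivity) ht 2
  nlinarith [mul_le_mul_of_nonneg_right (le_self_pow₀ hm1 two_ne_zero) (sq_nonneg w),
    mul_le_mul_of_nonneg_right (neg_abs_le a) (sq_nonneg w), abs_nonneg b, pow_pos hw 2]

theorem mul_add_lt_dE {A₀ : R} (hm : 2 * (|a| + |b|) + 1 ≤ m) (hA₀ : A₀ ≤ m) (hm3 : 3 ≤ m)
    (hw : 1 ≤ w) (ht : m * w ≤ t) : w * (t + A₀ * w) < dE a b t w := by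
  have hw0 : 0 ≤ w := by linarith
  have hAt : A₀ * w ≤ t := (mul_le_mul_of_nonneg_right hA₀ hw0).trans ht
  have ht3 : 3 ≤ t := by nlinarith
  have hwt : 0 < w * t := by positivity
  nlinarith [mul_cube_le_two_mul_dE hm hw0 ht, mul_le_mul_of_nonneg_left hAt hw0,
    mul_le_mul_of_nonneg_left (show 9 ≤ t ^ 2 by nlinarith) hwt.le]

end OrderedRing

section Real

variable {a b m t w K ε' : ℝ}

theorem mul_rpow_lt_dE (hm : 2 * (|a| + |b|) + 1 ≤ m) (hK : 0 ≤ K) (hKm : 8 * K < m)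
    (hw : 1 ≤ w) (ht : m * w ≤ t) (hε'0 : 0 ≤ ε') (hε'1 : ε' ≤ 1) :
    K * (w * (t + w)) ^ (1 + ε') < dE a b t w := by
  have hwt : w ≤ t := by nlinarith [abs_nonneg a, abs_nonneg b]
  have hw0 : 0 < w := by linarith
  have ht0 : 0 < t := by linarith
  have hle : (w * (t + w)) ^ (1 + ε') ≤ (2 * t * w) ^ 2 :=
    calc (w * (t + w)) ^ (1 + ε') ≤ (2 * t * w) ^ (1 + ε') :=
          Real.rpow_le_rpow (by positivity) (by nlinarith) (by linarith)
      _ ≤ (2 * t * w) ^ (2 : ℝ) :=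
          Real.rpow_le_rpow_of_exponent_le (by nlinarith) (by linarith)
      _ = (2 * t * w) ^ 2 := Real.rpow_two _
  have h8 : 8 * K * w < t := by nlinarith
  nlinarith [mul_le_mul_of_nonneg_left hle hK, mul_cube_le_two_mul_dE hm (by linarith) ht,
    mul_lt_mul_of_pos_right h8 (by positivity : 0 < t ^ 2 * w)]

theorem dE_lt_rpow (hm : 2 * (|a| + |b|) + 1 ≤ m) (hw : 1 ≤ w) (ht : m * w ≤ t)
    (ht' : t ≤ 2 * w ^ (1 + ε')) (hwε : 16 ≤ w ^ ε') (hε' : 0 ≤ ε') :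
    dE a b t w < (w ^ 3 * (t + w)) ^ (1 + ε') := by
  have hw0 : 0 < w := by linarith
  have ht0 : 0 < t := by nlinarith [abs_nonneg a, abs_nonneg b]
  set p := w ^ (1 + ε') with hp
  have hpw : p = w * w ^ ε' := by rw [hp, Real.rpow_add hw0, Real.rpow_one]
  have hp0 : 0 < p := by positivity
  calc dE a b t w ≤ 2 * w * t ^ 3 := dE_le_two_mul_mul_cube hm hw0.le ht
    _ ≤ 2 * w * (2 * p) ^ 3 := by gcongr
    _ ≤ p ^ 4 := by
        rw [show p ^ 4 = w * w ^ ε' * p ^ 3 by rw [← hpw]; ring]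
        nlinarith [mul_le_mul_of_nonneg_right hwε (by positivity : 0 ≤ w * p ^ 3)]
    _ = (w ^ 4) ^ (1 + ε') := Real.rpow_pow_comm hw0.le _ 4
    _ < (w ^ 3 * (t + w)) ^ (1 + ε') := by
        apply Real.rpow_lt_rpow (by positivity) _ (by linarith)
        nlinarith [pow_pos hw0 3]

theorem suitable_of_le_rpow {A₀ x : ℝ} (hK : 0 ≤ K) (hA₀ : 0 ≤ A₀)
    (hm : 8 * K + A₀ + 2 * (|a| + |b|) + 10 ≤ m) (hε'0 : 0 ≤ ε') (hε'1 : ε' ≤ 1)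
    (hx : 0 ≤ x) (hw : 1 ≤ w) (hwε : 16 * m ≤ w ^ ε') (hxw : x ≤ w ^ (1 + ε')) :
    w * (x + (m + A₀) * w) < dE a b (x + m * w) w ∧
      K * (w * (x + (m + 1) * w)) ^ (1 + ε') < dE a b (x + m * w) w ∧
      dE a b (x + m * w) w < (w ^ 3 * (x + (m + 1) * w)) ^ (1 + ε') := by
  have ha := abs_nonneg a
  have hb := abs_nonneg b
  have hab : 2 * (|a| + |b|) + 1 ≤ m := by linarith
  have ht : m * w ≤ x + m * w := by linarith
  have ht' : x + m * w ≤ 2 * w ^ (1 + ε') := by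
    rw [Real.rpow_add (by linarith), Real.rpow_one] at hxw ⊢
    nlinarith
  have hsplit : x + (m + 1) * w = (x + m * w) + w := by ring
  refine ⟨?_, ?_, ?_⟩
  · rw [show x + (m + A₀) * w = (x + m * w) + A₀ * w by ring]
    exact mul_add_lt_dE hab (by linarith) (by linarith) hw ht
  · rw [hsplit]
    exact mul_rpow_lt_dE hab hK (by linarith) hw ht hε'0 hε'1
  · rw [hsplit]
    exact dE_lt_rpow hab hw ht ht' (by linarith) hε'0

theorem mul_add_rpow_le {Y c ε : ℝ} (hY : 1 ≤ Y) (hc : 0 ≤ c) (hε : ε ≤ 1) :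
    Y * (c + Y ^ (1 - ε)) ≤ (c + 1) * Y ^ (2 - ε) := by
  have hsplit : Y ^ (2 - ε) = Y * Y ^ (1 - ε) := by
    rw [show 2 - ε = 1 + (1 - ε) by ring, Real.rpow_add (by linarith), Real.rpow_one]
  have hle : Y ≤ Y ^ (2 - ε) := by
    simpa using Real.rpow_le_rpow_of_exponent_le hY (show (1 : ℝ) ≤ 2 - ε by linarith)
  nlinarith

theorem pos_le_one_and_one_sub_inv_of_eq_div {ε : ℝ} (hε0 : 0 < ε) (hε1 : ε < 1 / 2)
    (hε' : ε' = ε / (1 - ε)) : 0 < ε' ∧ ε' ≤ 1 ∧ (1 - ε)⁻¹ = 1 + ε' := by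
  subst hε'
  refine ⟨div_pos hε0 (by linarith), (div_le_one (by linarith)).mpr (by linarith), ?_⟩
  field_simp [show 1 - ε ≠ 0 by linarith]
  ring

theorem le_rpow_and_le_rpow_of_rpow_inv_add_le {ε c x Y : ℝ} (hε1 : ε < 1) (hε'0 : 0 < ε')
    (hinv : (1 - ε)⁻¹ = 1 + ε') (hc : 0 ≤ c) (hx : 0 ≤ x) (hxY : x < Y)
    (hw : c ^ ε'⁻¹ + Y ^ (1 - ε) ≤ w) : c ≤ w ^ ε' ∧ x ≤ w ^ (1 + ε') := by
  have hc' := Real.rpow_nonneg hc ε'⁻¹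
  have hY := Real.rpow_nonneg (hx.trans hxY.le) (1 - ε)
  refine ⟨(Real.rpow_inv_le_iff_of_pos hc (by linarith) hε'0).mp (by linarith), ?_⟩
  rw [← hinv]
  refine ((Real.lt_rpow_inv_iff_of_pos hx (by linarith) (by linarith)).mpr ?_).le
  exact (Real.rpow_lt_rpow hx hxY (by linarith)).trans_le (by linarith)

end Real

theorem ncard_le_mul_of_bounded {S : Set (ℤ × ℤ)} {X Y : ℝ} (hX : 0 ≤ X) (hY : 0 ≤ Y)
    (hS : ∀ p ∈ S, 0 < p.1 ∧ (p.1 : ℝ) ≤ X ∧ 0 < p.2 ∧ (p.2 : ℝ) ≤ Y) :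
    (S.ncard : ℝ) ≤ X * Y := by
  have hsub : S ⊆ ↑(Finset.Icc 1 ⌊X⌋ ×ˢ Finset.Icc 1 ⌊Y⌋) := by
    intro p hp
    obtain ⟨h1, h2, h3, h4⟩ := hS p hp
    simp only [Finset.coe_product, Set.mem_prod, Finset.coe_Icc, Set.mem_Icc]
    exact ⟨⟨h1, Int.le_floor.mpr h2⟩, h3, Int.le_floor.mpr h4⟩
  calc (S.ncard : ℝ) ≤ (Finset.Icc 1 ⌊X⌋ ×ˢ Finset.Icc 1 ⌊Y⌋).card := by
        exact_mod_cast (Set.ncard_le_ncard hsub (Finset.finite_toSet _)).trans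
          (Set.ncard_coe_finset _).le
    _ = (⌊X⌋₊ : ℝ) * ⌊Y⌋₊ := by simp [Finset.card_product, Int.card_Icc, Int.floor_toNat]
    _ ≤ X * Y := mul_le_mul (Nat.floor_le hX) (Nat.floor_le hY) (by positivity) hX

/-- Lemma 4.2: there is an `N > 0` such that for every `n > N`, the pair `(x+ny, y)`
is map-suitable for all positive `x, y`, and the number of pairs `0 < x, y < Y`
failing kernel-suitability or ε-bound-suitability is `O(Y^(2−ε))`. -/
theorem stmt_15 (a₄ a₆ : ℤ) (ε ε' K A₀ : ℝ) (hε0 : 0 < ε) (hε1 : ε < 1 / 2)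
    (hε' : ε' = ε / (1 - ε)) (hK : 0 < K) (hA₀ : 0 ≤ A₀) :
    ∃ N : ℕ, 0 < N ∧ ∀ n : ℕ, N < n →
      (∀ x y : ℤ, 0 < x → 0 < y →
        0 < y * ((x + n * y) ^ 3 + a₄ * (x + n * y) * y ^ 2 - a₆ * y ^ 3) ∧
        0 < 3 * (x + n * y) ^ 2 + a₄ * y ^ 2) ∧
      ∃ c : ℝ, 0 < c ∧ ∀ Y : ℝ, 2 ≤ Y →
        (Set.ncard {p : ℤ × ℤ |
            0 < p.1 ∧ (p.1 : ℝ) < Y ∧ 0 < p.2 ∧ (p.2 : ℝ) < Y ∧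
            ¬ ((2 ≤ p.2 ∧
                  ((p.2 * ((p.1 + n * p.2) ^ 3 + a₄ * (p.1 + n * p.2) * p.2 ^ 2
                      - a₆ * p.2 ^ 3) : ℤ) : ℝ)
                    > (p.2 : ℝ) * ((p.1 : ℝ) + ((n : ℝ) + A₀) * (p.2 : ℝ))) ∧
               ((p.2 * ((p.1 + n * p.2) ^ 3 + a₄ * (p.1 + n * p.2) * p.2 ^ 2
                      - a₆ * p.2 ^ 3) : ℤ) : ℝ)
                    > K * ((p.2 : ℝ) * ((p.1 : ℝ) + ((n : ℝ) + 1) * (p.2 : ℝ))) ^ (1 + ε') ∧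
               ((p.2 * ((p.1 + n * p.2) ^ 3 + a₄ * (p.1 + n * p.2) * p.2 ^ 2
                      - a₆ * p.2 ^ 3) : ℤ) : ℝ)
                    < ((p.2 : ℝ) ^ 3 * ((p.1 : ℝ) + ((n : ℝ) + 1) * (p.2 : ℝ))) ^ (1 + ε'))}
          : ℝ) ≤ c * Y ^ (2 - ε) := by
  obtain ⟨hε'0, hε'1, hinv⟩ := pos_le_one_and_one_sub_inv_of_eq_div hε0 hε1 hε'
  set M : ℝ := 8 * K + A₀ + 2 * (|(a₄ : ℝ)| + |(a₆ : ℝ)|) + 10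
  refine ⟨⌈M⌉₊, Nat.ceil_pos.mpr (by positivity), fun n hn => ?_⟩
  have hnM : M ≤ n := (Nat.le_ceil M).trans (by exact_mod_cast hn.le)
  refine ⟨fun x y hx hy => ?_, ?_⟩
  · have hnZ : 2 * (|a₄| + |a₆|) + 1 ≤ (n : ℤ) := by
      exact_mod_cast (show ((2 * (|a₄| + |a₆|) + 1 : ℤ) : ℝ) ≤ (n : ℤ) by push_cast; linarith)
    have ht : (n : ℤ) * y ≤ x + n * y := by linarith
    exact ⟨dE_pos hnZ hy ht, three_mul_sq_add_pos hnZ hy ht⟩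
  set y₀ : ℝ := (16 * n) ^ ε'⁻¹ + 2 with hy₀
  refine ⟨y₀ + 1, by positivity, fun Y hY => ?_⟩
  calc _ ≤ Y * (y₀ + Y ^ (1 - ε)) := ncard_le_mul_of_bounded (by linarith) (by positivity) ?_
    _ ≤ (y₀ + 1) * Y ^ (2 - ε) := mul_add_rpow_le (by linarith) (by positivity) (by linarith)
  rintro ⟨x, y⟩ ⟨hx, hxY, hy, -, hfail⟩
  refine ⟨hx, hxY.le, hy, ?_⟩
  by_contra! hlarge
  have hYε := Real.rpow_nonneg (by linarith : (0 : ℝ) ≤ Y) (1 - ε)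
  have h16 := Real.rpow_nonneg (by positivity : (0 : ℝ) ≤ 16 * n) ε'⁻¹
  obtain ⟨hnε, hxy⟩ := le_rpow_and_le_rpow_of_rpow_inv_add_le (c := 16 * n) (w := y)
    (by linarith) hε'0 hinv (by positivity) (by positivity) hxY (by linarith)
  obtain ⟨h1, h2, h3⟩ := suitable_of_le_rpow hK.le hA₀ hnM hε'0.le hε'1 (by positivity)
    (by linarith) hnε hxy
  apply hfail
  push_cast
  exact ⟨⟨by exact_mod_cast (by linarith : (2 : ℝ) ≤ y), h1⟩, h2, h3⟩
end

section
/- Let a₄, a₆ be integers and let d be a positive integer. Then the number of pairs (u, v) of positive integers satisfying v(u³ + a₄uv² − a₆v³) = d is at most 3·τ(d), where τ(d) denotes the number of positive divisors of d. -/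
/-!
Any solution has `v ∣ d`, so `v` ranges over the positive divisors of `d`. For fixed `v ≠ 0` the
admissible `u` are integer roots of the cubic `v·(X³ + a₄v²X − a₆v³) − d`, so there are at most three.
-/

open Polynomial

theorem Polynomial.ncard_setOf_isRoot_le {R : Type*} [CommRing R] [IsDomain R] {p : R[X]}
    (hp : p ≠ 0) : {x | p.IsRoot x}.ncard ≤ p.natDegree := by
  classical
  have hroots : {x | p.IsRoot x} = ↑p.roots.toFinset := by
    ext x
    simp [mem_roots hp]
  rw [hroots, Set.ncard_coe_finset]
  exact (Multiset.toFinset_card_le _).trans p.card_roots'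

theorem Set.ncard_le_mul_card_of_fibers {α β : Type*} {s : Set (α × β)} {t : Finset β} {n : ℕ}
    (hs : ∀ p ∈ s, p.2 ∈ t) (hfin : ∀ b ∈ t, {a | (a, b) ∈ s}.Finite)
    (hcard : ∀ b ∈ t, {a | (a, b) ∈ s}.ncard ≤ n) : s.ncard ≤ n * t.card := by
  have hcover : s = ⋃ b ∈ t, (·, b) '' {a | (a, b) ∈ s} := by
    ext ⟨a, b⟩
    simpa using hs (a, b)
  calc s.ncard = (⋃ b ∈ t, (·, b) '' {a | (a, b) ∈ s}).ncard := congrArg _ hcover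
    _ ≤ ∑ b ∈ t, ((·, b) '' {a | (a, b) ∈ s}).ncard := t.set_ncard_biUnion_le _
    _ ≤ ∑ _b ∈ t, n :=
        Finset.sum_le_sum fun b hb => (Set.ncard_image_le (hfin b hb)).trans (hcard b hb)
    _ = n * t.card := by rw [Finset.sum_const, smul_eq_mul, mul_comm]

section Fiber

variable (a₄ a₆ d : ℤ) {v : ℤ}

noncomputable def fiberPoly (v : ℤ) : ℤ[X] :=
  C v * (X ^ 3 + C (a₄ * v ^ 2) * X - C (a₆ * v ^ 3)) - C d

theorem isRoot_fiberPoly_iff (u : ℤ) :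
    (fiberPoly a₄ a₆ d v).IsRoot u ↔ v * (u ^ 3 + a₄ * u * v ^ 2 - a₆ * v ^ 3) = d := by
  simp only [IsRoot, fiberPoly, eval_sub, eval_mul, eval_add, eval_pow, eval_C, eval_X, sub_eq_zero]
  ring_nf

theorem natDegree_fiberPoly (hv : v ≠ 0) : (fiberPoly a₄ a₆ d v).natDegree = 3 := by
  unfold fiberPoly
  compute_degree!

theorem fiberPoly_ne_zero (hv : v ≠ 0) : fiberPoly a₄ a₆ d v ≠ 0 := by
  intro h
  simpa [h] using natDegree_fiberPoly a₄ a₆ d hv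

theorem finite_setOf_fiber (hv : v ≠ 0) :
    {u : ℤ | v * (u ^ 3 + a₄ * u * v ^ 2 - a₆ * v ^ 3) = d}.Finite := by
  simpa only [isRoot_fiberPoly_iff] using finite_setOfPred_isRoot (fiberPoly_ne_zero a₄ a₆ d hv)

theorem ncard_setOf_fiber_le (hv : v ≠ 0) :
    {u : ℤ | v * (u ^ 3 + a₄ * u * v ^ 2 - a₆ * v ^ 3) = d}.ncard ≤ 3 := by
  simpa only [isRoot_fiberPoly_iff, natDegree_fiberPoly a₄ a₆ d hv] using
    Polynomial.ncard_setOf_isRoot_le (fiberPoly_ne_zero a₄ a₆ d hv)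

end Fiber

/-- Fiber bound from the proof of Theorem 1.2: the number of pairs of positive
integers `(u, v)` with `v(u³ + a₄uv² − a₆v³) = d` is at most `3·τ(d)`. -/
theorem stmt_16 (a₄ a₆ : ℤ) (d : ℕ) (hd : 0 < d) :
    Set.ncard {p : ℤ × ℤ | 0 < p.1 ∧ 0 < p.2 ∧
        p.2 * (p.1 ^ 3 + a₄ * p.1 * p.2 ^ 2 - a₆ * p.2 ^ 3) = (d : ℤ)}
      ≤ 3 * d.divisors.card := by
  set S := {p : ℤ × ℤ | 0 < p.1 ∧ 0 < p.2 ∧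
    p.2 * (p.1 ^ 3 + a₄ * p.1 * p.2 ^ 2 - a₆ * p.2 ^ 3) = (d : ℤ)}
  set t := d.divisors.map (Nat.castEmbedding : ℕ ↪ ℤ)
  have ht : ∀ v ∈ t, v ≠ 0 := by
    simp only [t, Finset.mem_map, Nat.castEmbedding_apply]
    rintro _ ⟨n, hn, rfl⟩
    exact_mod_cast (Nat.pos_of_mem_divisors hn).ne'
  have hfiber (v : ℤ) : {u | (u, v) ∈ S} ⊆
      {u : ℤ | v * (u ^ 3 + a₄ * u * v ^ 2 - a₆ * v ^ 3) = d} := fun _ h => h.2.2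
  rw [← Finset.card_map (Nat.castEmbedding : ℕ ↪ ℤ)]
  refine Set.ncard_le_mul_card_of_fibers ?_
    (fun v hv => (finite_setOf_fiber a₄ a₆ d (ht v hv)).subset (hfiber v))
    (fun v hv => (Set.ncard_le_ncard (hfiber v) (finite_setOf_fiber a₄ a₆ d (ht v hv))).trans
      (ncard_setOf_fiber_le a₄ a₆ d (ht v hv)))
  rintro ⟨u, v⟩ ⟨-, hv, h⟩
  lift v to ℕ using hv.le
  simp only [Finset.mem_map, Nat.mem_divisors, Nat.castEmbedding_apply, Nat.cast_inj]
  exact ⟨v, ⟨Int.natCast_dvd_natCast.mp (Dvd.intro _ h), hd.ne'⟩, rfl⟩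
end
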